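/- arXiv:1108.3052 — 2 statements merged into one kernel-verified Lean document; each statement's English description precedes it below -/
import Mathlib

section
/- Let q ∈ [0,1), Φ(z) = (z + sqrt(z²-4q))/2 the exterior conformal map of the ellipse with inverse φ(w) = w + q/w, and U_n = Φ^n Φ' (1 - q^{n+1}/Φ^{2n+2}) the monic Chebyshev polynomial of the second kind for [-2√q, 2√q]. Then for all integers 0 ≤ k < n, ∫_D U_n(z) conj(z^k) dA(z) = 0, where D is the open interior of the ellipse φ(𝕋). -/
open MeasureTheory Complex Set
open scoped Real

lemma cheb_exp_integral_zero {m : ℤ} (hm : m ≠ 0) :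
    ∫ θ in (-π)..π, Complex.exp ((m : ℂ) * Complex.I * (θ : ℝ)) = 0 := by
  have hc : (m : ℂ) * Complex.I ≠ 0 :=
    mul_ne_zero (by exact_mod_cast hm) Complex.I_ne_zero
  have h := integral_exp_mul_complex (a := -π) (b := π) hc
  have h2 : ((m : ℂ) * Complex.I) * ((π : ℝ) : ℂ) =
      ((m : ℂ) * Complex.I) * (((-π : ℝ)) : ℂ) + (m : ℂ) * (2 * (π : ℂ) * Complex.I) := by
    push_cast; ring
  rw [h, h2, Complex.exp_add, Complex.exp_int_mul_two_pi_mul_I, mul_one, sub_self, zero_div]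

lemma cheb_cont_zpow (r : ℝ) (hr : 0 < r) (m : ℤ) :
    Continuous fun θ : ℝ => ((r : ℂ) * Complex.exp ((θ : ℂ) * Complex.I)) ^ m := by
  have hw : ∀ θ : ℝ, (r : ℂ) * Complex.exp ((θ : ℂ) * Complex.I) ≠ 0 :=
    fun θ => mul_ne_zero (Complex.ofReal_ne_zero.2 hr.ne') (Complex.exp_ne_zero _)
  exact (continuous_const.mul (Complex.continuous_exp.comp
    (Complex.continuous_ofReal.mul continuous_const))).zpow₀ m fun θ => Or.inl (hw θ)

lemma cheb_mono_integral_zero {r : ℝ} (hr : 0 < r) {m s : ℤ} (hms : m ≠ s) :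
    ∫ θ in (-π)..π, ((r : ℂ) * Complex.exp ((θ : ℂ) * Complex.I)) ^ m *
      (starRingEnd ℂ) (((r : ℂ) * Complex.exp ((θ : ℂ) * Complex.I)) ^ s) = 0 := by
  have hrc : (r : ℂ) ≠ 0 := Complex.ofReal_ne_zero.2 hr.ne'
  have key : ∀ θ : ℝ, ((r : ℂ) * Complex.exp ((θ : ℂ) * Complex.I)) ^ m *
      (starRingEnd ℂ) (((r : ℂ) * Complex.exp ((θ : ℂ) * Complex.I)) ^ s) =
      ((r : ℂ) ^ (m + s)) * Complex.exp (((m - s : ℤ) : ℂ) * Complex.I * (θ : ℝ)) := by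
    intro θ
    rw [map_zpow₀, map_mul, Complex.conj_ofReal, ← Complex.exp_conj]
    have hconj : (starRingEnd ℂ) ((θ : ℂ) * Complex.I) = -((θ : ℂ) * Complex.I) := by
      simp [Complex.conj_ofReal]
    rw [hconj, mul_zpow, mul_zpow, ← Complex.exp_int_mul, ← Complex.exp_int_mul,
      zpow_add₀ hrc]
    have hexp : Complex.exp ((m : ℂ) * ((θ:ℂ) * Complex.I)) *
        Complex.exp ((s : ℂ) * -((θ:ℂ) * Complex.I)) =
        Complex.exp (((m - s : ℤ) : ℂ) * Complex.I * (θ : ℝ)) := by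
      rw [← Complex.exp_add]; congr 1; push_cast; ring
    calc (r:ℂ) ^ m * Complex.exp ((m : ℂ) * ((θ:ℂ) * Complex.I)) *
          ((r:ℂ) ^ s * Complex.exp ((s : ℂ) * -((θ:ℂ) * Complex.I)))
        = (r:ℂ) ^ m * (r:ℂ) ^ s * (Complex.exp ((m : ℂ) * ((θ:ℂ) * Complex.I)) *
            Complex.exp ((s : ℂ) * -((θ:ℂ) * Complex.I))) := by ring
      _ = (r:ℂ) ^ m * (r:ℂ) ^ s * Complex.exp (((m - s : ℤ) : ℂ) * Complex.I * (θ : ℝ)) := by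
            rw [hexp]
  rw [intervalIntegral.integral_congr fun θ _ => key θ, intervalIntegral.integral_const_mul,
    cheb_exp_integral_zero (by omega : m - s ≠ 0), mul_zero]

lemma cheb_G_expand (q : ℝ) (k : ℕ) {w : ℂ} (hw : w ≠ 0) :
    (1 - (q:ℂ)/w^2) * (w + (q:ℂ)/w)^k =
      ∑ c ∈ Finset.range (k+1), (k.choose c : ℂ) * (q:ℂ)^c *
        (w ^ ((k:ℤ) - 2*c) - (q:ℂ) * w ^ ((k:ℤ) - 2*c - 2)) := by
  rw [add_comm w ((q:ℂ)/w), add_pow, Finset.mul_sum]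
  apply Finset.sum_congr rfl
  intro c hc
  have hck : c ≤ k := Nat.lt_succ_iff.mp (Finset.mem_range.mp hc)
  have h1 : w ^ ((k:ℤ) - 2*c) = w ^ (k - c) / w ^ c := by
    rw [div_eq_mul_inv, ← zpow_natCast w (k-c), ← zpow_natCast w c, ← zpow_neg,
      ← zpow_add₀ hw]
    congr 1
    omega
  have h2 : w ^ ((k:ℤ) - 2*c - 2) = w ^ (k - c) / w ^ c / w ^ 2 := by
    rw [div_div, div_eq_mul_inv, ← zpow_natCast w (k-c), ← zpow_natCast w (c),
      ← zpow_natCast w 2, ← zpow_add₀ hw, ← zpow_neg, ← zpow_add₀ hw]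
    congr 1
    omega
  rw [h1, h2, div_pow]
  field_simp

lemma cheb_half (q : ℝ) (k : ℕ) {r : ℝ} (hr : 0 < r) {m : ℤ}
    (hm : ∀ c : ℕ, c ≤ k → m ≠ (k:ℤ) - 2*c ∧ m ≠ (k:ℤ) - 2*c - 2) :
    ∫ θ in (-π)..π, ((r : ℂ) * Complex.exp ((θ : ℂ) * Complex.I)) ^ m *
      (starRingEnd ℂ) ((1 - (q:ℂ)/((r : ℂ) * Complex.exp ((θ : ℂ) * Complex.I))^2) *
        (((r : ℂ) * Complex.exp ((θ : ℂ) * Complex.I)) + (q:ℂ)/((r : ℂ) *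
          Complex.exp ((θ : ℂ) * Complex.I)))^k) = 0 := by
  have hw : ∀ θ : ℝ, (r : ℂ) * Complex.exp ((θ : ℂ) * Complex.I) ≠ 0 :=
    fun θ => mul_ne_zero (Complex.ofReal_ne_zero.2 hr.ne') (Complex.exp_ne_zero _)
  have key : ∀ θ : ℝ, ((r : ℂ) * Complex.exp ((θ : ℂ) * Complex.I)) ^ m *
      (starRingEnd ℂ) ((1 - (q:ℂ)/((r : ℂ) * Complex.exp ((θ : ℂ) * Complex.I))^2) *
        (((r : ℂ) * Complex.exp ((θ : ℂ) * Complex.I)) + (q:ℂ)/((r : ℂ) *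
          Complex.exp ((θ : ℂ) * Complex.I)))^k) =
      ∑ c ∈ Finset.range (k+1), ((k.choose c : ℂ) * (q:ℂ)^c *
        (((r : ℂ) * Complex.exp ((θ : ℂ) * Complex.I)) ^ m *
          (starRingEnd ℂ) (((r : ℂ) * Complex.exp ((θ : ℂ) * Complex.I)) ^ ((k:ℤ) - 2*c))
         - (q:ℂ) * (((r : ℂ) * Complex.exp ((θ : ℂ) * Complex.I)) ^ m *
          (starRingEnd ℂ) (((r : ℂ) * Complex.exp ((θ : ℂ) * Complex.I)) ^ ((k:ℤ) - 2*c - 2))))) := by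
    intro θ
    rw [cheb_G_expand q k (hw θ), map_sum, Finset.mul_sum]
    apply Finset.sum_congr rfl
    intro c _
    rw [map_mul, map_sub, map_mul, map_mul]
    simp only [Complex.conj_ofReal, map_natCast, map_pow]
    ring
  rw [intervalIntegral.integral_congr fun θ _ => key θ]
  rw [intervalIntegral.integral_finset_sum]
  · apply Finset.sum_eq_zero
    intro c hc
    have hck : c ≤ k := Nat.lt_succ_iff.mp (Finset.mem_range.mp hc)
    rw [intervalIntegral.integral_const_mul, intervalIntegral.integral_sub,
      intervalIntegral.integral_const_mul,
      cheb_mono_integral_zero hr (hm c hck).1, cheb_mono_integral_zero hr (hm c hck).2,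
      mul_zero, sub_zero, mul_zero]
    · exact ((cheb_cont_zpow r hr m).mul
        (Complex.continuous_conj.comp (cheb_cont_zpow r hr _))).intervalIntegrable _ _
    · exact (continuous_const.mul ((cheb_cont_zpow r hr m).mul
        (Complex.continuous_conj.comp (cheb_cont_zpow r hr _)))).intervalIntegrable _ _
  · intro c hc
    exact (continuous_const.mul (((cheb_cont_zpow r hr m).mul
        (Complex.continuous_conj.comp (cheb_cont_zpow r hr _))).sub
      (continuous_const.mul ((cheb_cont_zpow r hr m).mul
        (Complex.continuous_conj.comp (cheb_cont_zpow r hr _)))))).intervalIntegrable _ _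

lemma cheb_inner (q : ℝ) (n k : ℕ) (hkn : k < n) {r : ℝ} (hr : 0 < r) :
    ∫ θ in (-π)..π,
      ((((r : ℂ) * Complex.exp ((θ : ℂ) * Complex.I)) ^ (n:ℤ)
        - (q:ℂ)^(n+1) * ((r : ℂ) * Complex.exp ((θ : ℂ) * Complex.I)) ^ (-(n:ℤ)-2)) *
      (starRingEnd ℂ) ((1 - (q:ℂ)/((r : ℂ) * Complex.exp ((θ : ℂ) * Complex.I))^2) *
        (((r : ℂ) * Complex.exp ((θ : ℂ) * Complex.I)) + (q:ℂ)/((r : ℂ) *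
          Complex.exp ((θ : ℂ) * Complex.I)))^k)) = 0 := by
  have hw : ∀ θ : ℝ, (r : ℂ) * Complex.exp ((θ : ℂ) * Complex.I) ≠ 0 :=
    fun θ => mul_ne_zero (Complex.ofReal_ne_zero.2 hr.ne') (Complex.exp_ne_zero _)
  have hcontG : Continuous fun θ : ℝ =>
      (starRingEnd ℂ) ((1 - (q:ℂ)/((r : ℂ) * Complex.exp ((θ : ℂ) * Complex.I))^2) *
        (((r : ℂ) * Complex.exp ((θ : ℂ) * Complex.I)) + (q:ℂ)/((r : ℂ) *
          Complex.exp ((θ : ℂ) * Complex.I)))^k) := by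
    have hbase : Continuous fun θ : ℝ => (r : ℂ) * Complex.exp ((θ : ℂ) * Complex.I) :=
      continuous_const.mul (Complex.continuous_exp.comp
        (Complex.continuous_ofReal.mul continuous_const))
    exact Complex.continuous_conj.comp
      (((continuous_const.sub (continuous_const.div (hbase.pow 2)
          (fun θ => pow_ne_zero 2 (hw θ)))).mul
        ((hbase.add (continuous_const.div hbase hw)).pow k)))
  have hsplit : ∀ θ : ℝ,
      ((((r : ℂ) * Complex.exp ((θ : ℂ) * Complex.I)) ^ (n:ℤ)
        - (q:ℂ)^(n+1) * ((r : ℂ) * Complex.exp ((θ : ℂ) * Complex.I)) ^ (-(n:ℤ)-2)) *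
      (starRingEnd ℂ) ((1 - (q:ℂ)/((r : ℂ) * Complex.exp ((θ : ℂ) * Complex.I))^2) *
        (((r : ℂ) * Complex.exp ((θ : ℂ) * Complex.I)) + (q:ℂ)/((r : ℂ) *
          Complex.exp ((θ : ℂ) * Complex.I)))^k)) =
      (((r : ℂ) * Complex.exp ((θ : ℂ) * Complex.I)) ^ (n:ℤ) *
      (starRingEnd ℂ) ((1 - (q:ℂ)/((r : ℂ) * Complex.exp ((θ : ℂ) * Complex.I))^2) *
        (((r : ℂ) * Complex.exp ((θ : ℂ) * Complex.I)) + (q:ℂ)/((r : ℂ) *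
          Complex.exp ((θ : ℂ) * Complex.I)))^k))
      - (q:ℂ)^(n+1) * (((r : ℂ) * Complex.exp ((θ : ℂ) * Complex.I)) ^ (-(n:ℤ)-2) *
      (starRingEnd ℂ) ((1 - (q:ℂ)/((r : ℂ) * Complex.exp ((θ : ℂ) * Complex.I))^2) *
        (((r : ℂ) * Complex.exp ((θ : ℂ) * Complex.I)) + (q:ℂ)/((r : ℂ) *
          Complex.exp ((θ : ℂ) * Complex.I)))^k)) := by
    intro θ; ring
  rw [intervalIntegral.integral_congr fun θ _ => hsplit θ]
  rw [intervalIntegral.integral_sub, intervalIntegral.integral_const_mul]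
  · rw [cheb_half q k hr (m := (n:ℤ)) (fun c hc => by constructor <;> omega),
      cheb_half q k hr (m := -(n:ℤ)-2) (fun c hc => by constructor <;> omega),
      mul_zero, sub_zero]
  · exact ((cheb_cont_zpow r hr (n:ℤ)).mul hcontG).intervalIntegrable _ _
  · exact (continuous_const.mul ((cheb_cont_zpow r hr (-(n:ℤ)-2)).mul
      hcontG)).intervalIntegrable _ _

lemma cheb_det (c : ℂ) :
    ((c • (1 : ℂ →L[ℂ] ℂ)).restrictScalars ℝ).det = Complex.normSq c := by
  have h : (((c • (1 : ℂ →L[ℂ] ℂ)).restrictScalars ℝ) : ℂ →ₗ[ℝ] ℂ) =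
      Algebra.lmul ℝ ℂ c := by
    apply LinearMap.ext
    intro z
    simp [smul_eq_mul]
  rw [ContinuousLinearMap.det, h, ← Algebra.norm_apply, Algebra.norm_complex_apply]

lemma cheb_deriv (q : ℝ) {w : ℂ} (hw : w ≠ 0) :
    HasFDerivAt (fun z : ℂ => z + (q:ℂ)/z)
      (((1 - (q:ℂ)/w^2) • (1 : ℂ →L[ℂ] ℂ)).restrictScalars ℝ) w := by
  have h1 : HasDerivAt (fun z : ℂ => z + (q:ℂ)/z) (1 - (q:ℂ)/w^2) w := by
    have h2 : HasDerivAt (fun z : ℂ => (q:ℂ) * z⁻¹) ((q:ℂ) * (-(w^2)⁻¹)) w :=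
      (hasDerivAt_inv hw).const_mul (q:ℂ)
    have h3 := (hasDerivAt_id w).add h2
    simp only [div_eq_mul_inv]
    have heq : (1:ℂ) + (q:ℂ) * -(w^2)⁻¹ = 1 - (q:ℂ)*(w^2)⁻¹ := by ring
    exact heq ▸ h3
  have h4 : HasFDerivAt (fun z : ℂ => z + (q:ℂ)/z)
      (ContinuousLinearMap.smulRight (1 : ℂ →L[ℂ] ℂ) (1 - (q:ℂ)/w^2)) w := h1.hasFDerivAt
  have h5 : ContinuousLinearMap.smulRight (1 : ℂ →L[ℂ] ℂ) (1 - (q:ℂ)/w^2) =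
      (1 - (q:ℂ)/w^2) • (1 : ℂ →L[ℂ] ℂ) := by
    ext
    simp [mul_comm]
  exact (h5 ▸ h4).restrictScalars ℝ

lemma cheb_alg (q : ℝ) (n k : ℕ) (P : Polynomial ℂ)
    (hval : ∀ w : ℂ, w ≠ 0 → w - (q : ℂ) / w ≠ 0 →
      P.eval (w + (q : ℂ) / w) =
        (w ^ (n + 1) - (q : ℂ) ^ (n + 1) / w ^ (n + 1)) / (w - (q : ℂ) / w))
    {w : ℂ} (h0 : w ≠ 0) (h1 : w - (q:ℂ)/w ≠ 0) :
    (Complex.normSq (1 - (q:ℂ)/w^2) : ℝ) •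
      (P.eval (w + (q:ℂ)/w) * ((starRingEnd ℂ) (w + (q:ℂ)/w)) ^ k) =
    (w ^ (n:ℤ) - (q:ℂ)^(n+1) * w ^ (-(n:ℤ)-2)) *
      (starRingEnd ℂ) ((1 - (q:ℂ)/w^2) * (w + (q:ℂ)/w)^k) := by
  rw [hval w h0 h1]
  rw [Complex.real_smul, ← Complex.mul_conj, map_mul, map_pow]
  have hz1 : w ^ (n:ℤ) = w ^ n := zpow_natCast w n
  have hz2 : w ^ (-(n:ℤ)-2) = (w ^ (n+2))⁻¹ := by
    rw [← zpow_natCast w (n+2), ← zpow_neg]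
    congr 1
    push_cast
    ring
  rw [hz1, hz2]
  have hkey : (1 - (q:ℂ)/w^2) *
      ((w ^ (n + 1) - (q : ℂ) ^ (n + 1) / w ^ (n + 1)) / (w - (q : ℂ) / w)) =
      w ^ n - (q:ℂ)^(n+1) * (w ^ (n+2))⁻¹ := by
    have hsub : w - (q:ℂ)/w = (w^2 - q)/w := by field_simp
    have h2 : w^2 - (q:ℂ) ≠ 0 := by
      intro hc
      apply h1
      rw [hsub, hc, zero_div]
    rw [hsub]
    field_simp
    ring
  calc (1 - (q:ℂ)/w^2) * (starRingEnd ℂ) (1 - (q:ℂ)/w^2) *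
        ((w ^ (n + 1) - (q : ℂ) ^ (n + 1) / w ^ (n + 1)) / (w - (q : ℂ) / w) *
          ((starRingEnd ℂ) (w + (q:ℂ)/w)) ^ k)
      = ((1 - (q:ℂ)/w^2) * ((w ^ (n + 1) - (q : ℂ) ^ (n + 1) / w ^ (n + 1)) /
          (w - (q : ℂ) / w))) *
        ((starRingEnd ℂ) (1 - (q:ℂ)/w^2) * ((starRingEnd ℂ) (w + (q:ℂ)/w)) ^ k) := by ring
    _ = (w ^ n - (q:ℂ)^(n+1) * (w ^ (n+2))⁻¹) *
        ((starRingEnd ℂ) (1 - (q:ℂ)/w^2) * ((starRingEnd ℂ) ((w + (q:ℂ)/w))) ^ k) := by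
          rw [hkey]
    _ = _ := rfl

lemma cheb_core_lt {q r x y : ℝ} (hq0 : 0 ≤ q) (hq1 : q < 1) (hr1 : q < r) (hr2 : r < 1)
    (hxy : x^2 + y^2 = r) :
    x^2*(r+q)^2*(1-q)^2 + y^2*(r-q)^2*(1+q)^2 < r^2*(1+q)^2*(1-q)^2 := by
  have hid : x^2*(r+q)^2*(1-q)^2 + y^2*(r-q)^2*(1+q)^2 - r^2*(1+q)^2*(1-q)^2 =
      (r-1)*(r-q^2)*(x^2*(1-q)^2 + y^2*(1+q)^2) := by
    linear_combination (r*(1+q)^2*(1-q)^2) * hxy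
  have hr0 : 0 < r := lt_of_le_of_lt hq0 hr1
  have hpos : 0 < x^2*(1-q)^2 + y^2*(1+q)^2 := by
    have h1 : (1-q)^2 * (x^2 + y^2) ≤ x^2*(1-q)^2 + y^2*(1+q)^2 := by
      nlinarith [mul_nonneg (sq_nonneg y) hq0]
    have h2 : 0 < (1-q)^2 * (x^2 + y^2) := by
      rw [hxy]; exact mul_pos (pow_pos (by linarith) 2) hr0
    linarith
  have hprod : 0 < (1 - r) * (r - q^2) := by
    have hqq : q^2 ≤ q := by nlinarith [mul_nonneg hq0 (by linarith : (0:ℝ) ≤ 1 - q)]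
    apply mul_pos <;> linarith
  nlinarith [mul_pos hprod hpos]

lemma cheb_core_ge {q r x y : ℝ} (hq0 : 0 ≤ q) (hq1 : q < 1) (hr1 : 1 ≤ r)
    (hxy : x^2 + y^2 = r) :
    r^2*(1+q)^2*(1-q)^2 ≤ x^2*(r+q)^2*(1-q)^2 + y^2*(r-q)^2*(1+q)^2 := by
  have hid : x^2*(r+q)^2*(1-q)^2 + y^2*(r-q)^2*(1+q)^2 - r^2*(1+q)^2*(1-q)^2 =
      (r-1)*(r-q^2)*(x^2*(1-q)^2 + y^2*(1+q)^2) := by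
    linear_combination (r*(1+q)^2*(1-q)^2) * hxy
  have hqq : q^2 ≤ q := by nlinarith [mul_nonneg hq0 (by linarith : (0:ℝ) ≤ 1 - q)]
  have hX : 0 ≤ x^2*(1-q)^2 + y^2*(1+q)^2 := by positivity
  nlinarith [mul_nonneg (mul_nonneg (by linarith : (0:ℝ) ≤ r - 1)
    (by nlinarith : (0:ℝ) ≤ r - q^2)) hX]

lemma cheb_re_im (q : ℝ) {w : ℂ} (hw : w ≠ 0) :
    (w + (q:ℂ)/w).re = w.re * (Complex.normSq w + q) / Complex.normSq w ∧
    (w + (q:ℂ)/w).im = w.im * (Complex.normSq w - q) / Complex.normSq w := by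
  have hns : Complex.normSq w ≠ 0 := (Complex.normSq_pos.2 hw).ne'
  constructor
  · rw [Complex.add_re, Complex.div_re]
    simp only [Complex.ofReal_re, Complex.ofReal_im]
    field_simp
    ring
  · rw [Complex.add_im, Complex.div_im]
    simp only [Complex.ofReal_re, Complex.ofReal_im]
    field_simp
    ring

lemma cheb_mem_ellipse (q : ℝ) (hq0 : 0 ≤ q) (hq1 : q < 1) {w : ℂ}
    (h1 : q < Complex.normSq w) (h2 : Complex.normSq w < 1) :
    ((w + (q:ℂ)/w).re / (1+q))^2 + ((w + (q:ℂ)/w).im / (1-q))^2 < 1 := by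
  have hr0 : 0 < Complex.normSq w := lt_of_le_of_lt hq0 h1
  have hw : w ≠ 0 := by
    intro hc; rw [hc] at hr0; simp at hr0
  obtain ⟨hre, him⟩ := cheb_re_im q hw
  rw [hre, him]
  set r := Complex.normSq w with hrdef
  have hxy : w.re^2 + w.im^2 = r := by
    rw [hrdef, Complex.normSq_apply]; ring
  have ha : (0:ℝ) < 1 + q := by linarith
  have hb : (0:ℝ) < 1 - q := by linarith
  have key := cheb_core_lt hq0 hq1 h1 h2 hxy
  rw [div_pow, div_pow, div_pow, div_pow, div_div, div_div]
  rw [div_add_div _ _ (by positivity) (by positivity), div_lt_one (by positivity)]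
  have key2 := mul_lt_mul_of_pos_left key (show (0:ℝ) < r^2 by positivity)
  ring_nf
  ring_nf at key2
  linarith [key2]

lemma cheb_not_mem_ellipse (q : ℝ) (hq0 : 0 ≤ q) (hq1 : q < 1) {w : ℂ}
    (h1 : 1 ≤ Complex.normSq w) :
    ¬ (((w + (q:ℂ)/w).re / (1+q))^2 + ((w + (q:ℂ)/w).im / (1-q))^2 < 1) := by
  have hr0 : 0 < Complex.normSq w := lt_of_lt_of_le one_pos h1
  have hw : w ≠ 0 := by
    intro hc; rw [hc] at hr0; simp at hr0
  obtain ⟨hre, him⟩ := cheb_re_im q hw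
  rw [hre, him, not_lt]
  set r := Complex.normSq w with hrdef
  have hxy : w.re^2 + w.im^2 = r := by
    rw [hrdef, Complex.normSq_apply]; ring
  have ha : (0:ℝ) < 1 + q := by linarith
  have hb : (0:ℝ) < 1 - q := by linarith
  have key := cheb_core_ge hq0 hq1 h1 hxy
  rw [div_pow, div_pow, div_pow, div_pow, div_div, div_div]
  rw [div_add_div _ _ (by positivity) (by positivity), le_div_iff₀ (by positivity)]
  have key2 := mul_le_mul_of_nonneg_left key (show (0:ℝ) ≤ r^2 by positivity)
  ring_nf
  ring_nf at key2
  linarith [key2]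

lemma cheb_inj (q : ℝ) (hq0 : 0 ≤ q) :
    Set.InjOn (fun w : ℂ => w + (q:ℂ)/w)
      {w : ℂ | q < Complex.normSq w ∧ Complex.normSq w < 1} := by
  intro a ha b hb h
  simp only [Set.mem_setOf_eq] at ha hb h
  have ha0 : a ≠ 0 := by
    intro hc; rw [hc] at ha; simp at ha; linarith
  have hb0 : b ≠ 0 := by
    intro hc; rw [hc] at hb; simp at hb; linarith
  have h2 : (a - b) * (a*b - (q:ℂ)) = 0 := by
    field_simp at h
    linear_combination h
  rcases mul_eq_zero.1 h2 with h3 | h3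
  · exact sub_eq_zero.1 h3
  · exfalso
    have : Complex.normSq (a*b) = Complex.normSq ((q:ℂ)) := by rw [sub_eq_zero.1 h3]
    rw [map_mul, Complex.normSq_ofReal] at this
    nlinarith [ha.1, hb.1, ha.2, hb.2]

lemma cheb_null : volume {z : ℂ | z.im = 0} = 0 := by
  have hpre : {z : ℂ | z.im = 0} =
      Complex.measurableEquivRealProd ⁻¹' (Set.univ ×ˢ ({0} : Set ℝ)) := by
    ext z
    simp [Complex.measurableEquivRealProd_apply, eq_comm]
  rw [hpre, Complex.volume_preserving_equiv_real_prod.measure_preimage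
    ((MeasurableSet.univ.prod (measurableSet_singleton (0:ℝ))).nullMeasurableSet)]
  rw [Measure.volume_eq_prod, Measure.prod_prod, Real.volume_singleton, mul_zero]

lemma cheb_pick (q : ℝ) (hq0 : 0 ≤ q) (hq1 : q < 1) {z u v : ℂ}
    (hsum : u + v = z) (hprod : u * v = (q:ℂ)) (hle : Complex.normSq v ≤ Complex.normSq u)
    (hz : (z.re/(1+q))^2 + (z.im/(1-q))^2 < 1) (him : z.im ≠ 0) :
    q < Complex.normSq u ∧ Complex.normSq u < 1 ∧ u + (q:ℂ)/u = z := by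
  have hprodns : Complex.normSq u * Complex.normSq v = q * q := by
    rw [← map_mul, hprod, Complex.normSq_ofReal]
  have hqu : q < Complex.normSq u := by
    by_contra hc
    push_neg at hc
    rcases eq_or_lt_of_le hq0 with hq | hq
    · -- q = 0
      have hu0 : u = 0 := by
        have : Complex.normSq u = 0 := le_antisymm (by rw [← hq] at hc; exact hc)
          (Complex.normSq_nonneg u)
        exact Complex.normSq_eq_zero.1 this
      have hv0 : v = 0 := by
        have : Complex.normSq v = 0 := le_antisymm (by
          calc Complex.normSq v ≤ Complex.normSq u := hle
            _ ≤ q := hc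
            _ = 0 := hq.symm) (Complex.normSq_nonneg v)
        exact Complex.normSq_eq_zero.1 this
      apply him
      rw [← hsum, hu0, hv0]
      simp
    · -- 0 < q
      have hnsu : Complex.normSq u = q := by nlinarith [Complex.normSq_nonneg v]
      have hu0 : u ≠ 0 := by
        intro hc2; rw [hc2] at hnsu; simp at hnsu; linarith
      have hv : v = (starRingEnd ℂ) u := by
        apply mul_left_cancel₀ hu0
        rw [hprod, Complex.mul_conj, hnsu]
      apply him
      rw [← hsum, hv]
      simp
  have hu0 : u ≠ 0 := by
    intro hc
    rw [hc] at hqu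
    simp at hqu
    linarith
  have hdiv : (q:ℂ)/u = v := by
    rw [div_eq_iff hu0, ← hprod]; ring
  have hz' : u + (q:ℂ)/u = z := by rw [hdiv]; exact hsum
  refine ⟨hqu, ?_, hz'⟩
  by_contra hc
  push_neg at hc
  exact cheb_not_mem_ellipse q hq0 hq1 hc (by rw [hz']; exact hz)

lemma cheb_surj (q : ℝ) (hq0 : 0 ≤ q) (hq1 : q < 1) {z : ℂ}
    (hz : (z.re/(1+q))^2 + (z.im/(1-q))^2 < 1) (him : z.im ≠ 0) :
    z ∈ (fun w : ℂ => w + (q:ℂ)/w) ''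
      {w : ℂ | q < Complex.normSq w ∧ Complex.normSq w < 1} := by
  have hs : ((z^2 - 4*(q:ℂ)) ^ (((2:ℕ):ℂ))⁻¹) ^ (2:ℕ) = z^2 - 4*(q:ℂ) :=
    Complex.cpow_nat_inv_pow _ two_ne_zero
  set s := (z^2 - 4*(q:ℂ)) ^ (((2:ℕ):ℂ))⁻¹ with hsdef
  have hsum : (z+s)/2 + (z-s)/2 = z := by ring
  have hsum' : (z-s)/2 + (z+s)/2 = z := by ring
  have hprod : ((z+s)/2) * ((z-s)/2) = (q:ℂ) := by linear_combination (-(1:ℂ)/4) * hs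
  have hprod' : ((z-s)/2) * ((z+s)/2) = (q:ℂ) := by linear_combination (-(1:ℂ)/4) * hs
  rcases le_total (Complex.normSq ((z-s)/2)) (Complex.normSq ((z+s)/2)) with hle | hle
  · obtain ⟨h1, h2, h3⟩ := cheb_pick q hq0 hq1 hsum hprod hle hz him
    exact ⟨(z+s)/2, ⟨h1, h2⟩, h3⟩
  · obtain ⟨h1, h2, h3⟩ := cheb_pick q hq0 hq1 hsum' hprod' hle hz him
    exact ⟨(z-s)/2, ⟨h1, h2⟩, h3⟩
lemma cheb_polar (q : ℝ) (hq0 : 0 ≤ q) (n k : ℕ) (hkn : k < n) :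
    ∫ w in {w : ℂ | q < Complex.normSq w ∧ Complex.normSq w < 1},
      (w ^ (n:ℤ) - (q:ℂ)^(n+1) * w ^ (-(n:ℤ)-2)) *
        (starRingEnd ℂ) ((1 - (q:ℂ)/w^2) * (w + (q:ℂ)/w)^k) = 0 := by
  set H : ℂ → ℂ := fun w => (w ^ (n:ℤ) - (q:ℂ)^(n+1) * w ^ (-(n:ℤ)-2)) *
        (starRingEnd ℂ) ((1 - (q:ℂ)/w^2) * (w + (q:ℂ)/w)^k) with hHdef
  set A : Set ℂ := {w : ℂ | q < Complex.normSq w ∧ Complex.normSq w < 1} with hAdef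
  have hAopen : IsOpen A := by
    exact (isOpen_lt continuous_const Complex.continuous_normSq).inter
      (isOpen_lt Complex.continuous_normSq continuous_const)
  have hAmeas : MeasurableSet A := hAopen.measurableSet
  set S : Set (ℝ × ℝ) := Ioo (Real.sqrt q) 1 ×ˢ Ioo (-π) π with hSdef
  have hSsub : S ⊆ polarCoord.target := by
    rintro ⟨r, θ⟩ ⟨hr, hθ⟩
    exact ⟨lt_of_le_of_lt (Real.sqrt_nonneg q) hr.1, hθ⟩
  have hSmeas : MeasurableSet S := (measurableSet_Ioo.prod measurableSet_Ioo)
  have hsymm : ∀ p : ℝ × ℝ, Complex.polarCoord.symm p =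
      (p.1 : ℂ) * Complex.exp ((p.2 : ℂ) * Complex.I) := by
    intro p
    rw [Complex.polarCoord_symm_apply, Complex.exp_mul_I, Complex.ofReal_cos,
      Complex.ofReal_sin]
  have hmem : ∀ p ∈ polarCoord.target, (Complex.polarCoord.symm p ∈ A ↔ p ∈ S) := by
    rintro ⟨r, θ⟩ ⟨hr, hθ⟩
    simp only [polarCoord_target, Set.mem_prod, Set.mem_Ioi] at hr hθ ⊢
    have hns : Complex.normSq (Complex.polarCoord.symm (r, θ)) = r^2 := by
      rw [← Complex.sq_norm, Complex.norm_polarCoord_symm, abs_of_pos hr]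
    constructor
    · rintro ⟨h1, h2⟩
      rw [hns] at h1 h2
      refine ⟨⟨(Real.sqrt_lt' hr).2 h1, ?_⟩, hθ⟩
      exact (pow_lt_one_iff_of_nonneg hr.le two_ne_zero).1 h2
    · rintro ⟨⟨h1, h2⟩, _⟩
      rw [hAdef, Set.mem_setOf_eq, hns]
      exact ⟨(Real.sqrt_lt' hr).1 h1, pow_lt_one₀ hr.le h2 two_ne_zero⟩
  rw [← integral_indicator hAmeas, ← Complex.integral_comp_polarCoord_symm (A.indicator H)]
  have step1 : ∫ p in polarCoord.target, p.1 • (A.indicator H) (Complex.polarCoord.symm p) =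
      ∫ p in polarCoord.target, S.indicator
        (fun p : ℝ × ℝ => p.1 • H ((p.1 : ℂ) * Complex.exp ((p.2 : ℂ) * Complex.I))) p := by
    apply setIntegral_congr_fun polarCoord.open_target.measurableSet
    intro p hp
    beta_reduce
    by_cases hpA : Complex.polarCoord.symm p ∈ A
    · rw [Set.indicator_of_mem hpA, Set.indicator_of_mem ((hmem p hp).1 hpA), hsymm]
    · rw [Set.indicator_of_notMem hpA, Set.indicator_of_notMem
        (fun hc => hpA ((hmem p hp).2 hc)), smul_zero]
  rw [step1, setIntegral_indicator hSmeas, Set.inter_eq_self_of_subset_right hSsub]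
  set g : ℝ × ℝ → ℂ := fun p => p.1 • H ((p.1 : ℂ) * Complex.exp ((p.2 : ℂ) * Complex.I))
    with hgdef
  have hc : Continuous (fun p : ℝ × ℝ => (p.1 : ℂ) * Complex.exp ((p.2:ℂ) * Complex.I)) :=
    (Complex.continuous_ofReal.comp continuous_fst).mul (Complex.continuous_exp.comp
      ((Complex.continuous_ofReal.comp continuous_snd).mul continuous_const))
  have hInt : IntegrableOn g S volume := by
    have hK : IsCompact (Icc (Real.sqrt q) 1 ×ˢ Icc (-π) π) := isCompact_Icc.prod isCompact_Icc
    have hsub2 : S ⊆ Icc (Real.sqrt q) 1 ×ˢ Icc (-π) π :=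
      Set.prod_mono Set.Ioo_subset_Icc_self Set.Ioo_subset_Icc_self
    refine (ContinuousOn.integrableOn_compact hK ?_).mono_set hsub2
    rcases eq_or_lt_of_le hq0 with hq | hq
    · have hH : H = fun w => w^n * (starRingEnd ℂ) (w^k) := by
        funext w
        rw [hHdef]
        rw [← hq]
        push_cast
        simp [zpow_natCast]
      rw [hgdef, hH]
      exact (continuous_fst.smul
        ((hc.pow n).mul (Complex.continuous_conj.comp (hc.pow k)))).continuousOn
    · have hne : ∀ p ∈ Icc (Real.sqrt q) 1 ×ˢ Icc (-π) π,
          (p.1:ℂ) * Complex.exp ((p.2:ℂ) * Complex.I) ≠ 0 := by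
        rintro ⟨r,θ⟩ ⟨hr,_⟩
        have hr0 : 0 < r := lt_of_lt_of_le (Real.sqrt_pos.2 hq) hr.1
        exact mul_ne_zero (Complex.ofReal_ne_zero.2 hr0.ne') (Complex.exp_ne_zero _)
      have hHc : H = fun w => ((w:ℂ)^n - (q:ℂ)^(n+1) * ((w:ℂ)^(n+2))⁻¹) *
          (starRingEnd ℂ) ((1 - (q:ℂ)/w^2) * (w + (q:ℂ)/w)^k) := by
        funext w
        have h1 : w ^ ((n:ℕ):ℤ) = w ^ n := zpow_natCast w n
        have h2 : w ^ (-(n:ℤ)-2) = (w ^ (n+2))⁻¹ := by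
          rw [← zpow_natCast w (n+2), ← zpow_neg]
          congr 1
          push_cast
          ring
        simp only [hHdef, h1, h2]
      rw [hgdef, hHc]
      refine (continuous_fst.continuousOn).smul (ContinuousOn.mul ?_ ?_)
      · exact ((hc.pow n).continuousOn).sub (continuousOn_const.mul
          (((hc.pow (n+2)).continuousOn).inv₀ fun p hp => pow_ne_zero _ (hne p hp)))
      · refine Complex.continuous_conj.comp_continuousOn (ContinuousOn.mul ?_ ?_)
        · exact continuousOn_const.sub (ContinuousOn.div continuousOn_const
            ((hc.pow 2).continuousOn) fun p hp => pow_ne_zero _ (hne p hp))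
        · exact ((hc.continuousOn).add (ContinuousOn.div continuousOn_const
            hc.continuousOn hne)).pow k
  rw [Measure.volume_eq_prod] at hInt ⊢
  rw [setIntegral_prod _ hInt]
  have hinner : ∀ r ∈ Ioo (Real.sqrt q) 1,
      (∫ θ in Ioo (-π) π, g (r, θ)) = 0 := by
    intro r hr
    have hr0 : 0 < r := lt_of_le_of_lt (Real.sqrt_nonneg q) hr.1
    rw [hgdef]
    beta_reduce
    rw [integral_smul, MeasureTheory.integral_Ioc_eq_integral_Ioo.symm,
      ← intervalIntegral.integral_of_le (by linarith [Real.pi_pos] : (-π:ℝ) ≤ π),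
      hHdef]
    beta_reduce
    rw [cheb_inner q n k hkn hr0, smul_zero]
  calc ∫ r in Ioo (Real.sqrt q) 1, ∫ θ in Ioo (-π) π, g (r, θ)
      = ∫ _r in Ioo (Real.sqrt q) 1, (0:ℂ) :=
        setIntegral_congr_fun measurableSet_Ioo hinner
    _ = 0 := by simp

/-- The monic Chebyshev polynomial of the second kind `U_n` for `[-2√q, 2√q]`
(characterized by `U_n(w + q/w) = (w^{n+1} - q^{n+1}/w^{n+1})/(w - q/w)`) is
orthogonal to `z^k`, `k < n`, over the interior `D` of the ellipse
`{e^{iθ} + q e^{-iθ}}` with respect to area measure. -/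
theorem chebyshev_area_orthogonality_ellipse (q : ℝ) (hq0 : 0 ≤ q) (hq1 : q < 1)
    (n : ℕ) (P : Polynomial ℂ) (hmonic : P.Monic) (hdeg : P.natDegree = n)
    (hval : ∀ w : ℂ, w ≠ 0 → w - (q : ℂ) / w ≠ 0 →
      P.eval (w + (q : ℂ) / w) =
        (w ^ (n + 1) - (q : ℂ) ^ (n + 1) / w ^ (n + 1)) / (w - (q : ℂ) / w)) :
    ∀ k : ℕ, k < n →
      (∫ z in {z : ℂ | (z.re / (1 + q)) ^ 2 + (z.im / (1 - q)) ^ 2 < 1},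
        P.eval z * ((starRingEnd ℂ) z) ^ k) = 0 := by
  intro k hkn
  have hAopen : IsOpen {w : ℂ | q < Complex.normSq w ∧ Complex.normSq w < 1} :=
    (isOpen_lt continuous_const Complex.continuous_normSq).inter
      (isOpen_lt Complex.continuous_normSq continuous_const)
  have hAmeas : MeasurableSet {w : ℂ | q < Complex.normSq w ∧ Complex.normSq w < 1} :=
    hAopen.measurableSet
  have hA0 : ∀ w ∈ {w : ℂ | q < Complex.normSq w ∧ Complex.normSq w < 1}, w ≠ 0 := by
    intro w hw hc
    rw [hc] at hw
    simp only [Set.mem_setOf_eq, map_zero] at hw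
    linarith [hw.1]
  have hAq : ∀ w ∈ {w : ℂ | q < Complex.normSq w ∧ Complex.normSq w < 1},
      w - (q:ℂ)/w ≠ 0 := by
    intro w hw h
    have hw0 : w ≠ 0 := hA0 w hw
    have h2 : w^2 = (q:ℂ) := by
      field_simp at h
      linear_combination h
    have h3 : Complex.normSq (w^2) = Complex.normSq ((q:ℂ)) := by rw [h2]
    rw [map_pow, Complex.normSq_ofReal] at h3
    have := hw.1
    nlinarith [hw.1]
  have himg : (fun w : ℂ => w + (q:ℂ)/w) ''
      {w : ℂ | q < Complex.normSq w ∧ Complex.normSq w < 1} ⊆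
      {z : ℂ | (z.re / (1 + q)) ^ 2 + (z.im / (1 - q)) ^ 2 < 1} := by
    rintro z ⟨w, hw, rfl⟩
    exact cheb_mem_ellipse q hq0 hq1 hw.1 hw.2
  have hcompl : {z : ℂ | (z.re / (1 + q)) ^ 2 + (z.im / (1 - q)) ^ 2 < 1} \
      ((fun w : ℂ => w + (q:ℂ)/w) ''
        {w : ℂ | q < Complex.normSq w ∧ Complex.normSq w < 1}) ⊆
      {z : ℂ | z.im = 0} := by
    rintro z ⟨hzE, hznot⟩
    by_contra him
    exact hznot (cheb_surj q hq0 hq1 hzE him)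
  have hae : {z : ℂ | (z.re / (1 + q)) ^ 2 + (z.im / (1 - q)) ^ 2 < 1} =ᵐ[volume]
      ((fun w : ℂ => w + (q:ℂ)/w) ''
        {w : ℂ | q < Complex.normSq w ∧ Complex.normSq w < 1}) := by
    refine (MeasureTheory.ae_eq_set.2 ⟨?_, ?_⟩)
    · exact measure_mono_null hcompl cheb_null
    · rw [Set.diff_eq_empty.2 himg]
      exact measure_empty
  rw [setIntegral_congr_set hae]
  rw [integral_image_eq_integral_abs_det_fderiv_smul volume hAmeas
      (f' := fun w => ((1 - (q:ℂ)/w^2) • (1 : ℂ →L[ℂ] ℂ)).restrictScalars ℝ)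
      (fun w hw => ((cheb_deriv q (hA0 w hw)).hasFDerivWithinAt)) (cheb_inj q hq0)
      (fun z => P.eval z * ((starRingEnd ℂ) z)^k)]
  have hpt : ∀ w ∈ {w : ℂ | q < Complex.normSq w ∧ Complex.normSq w < 1},
      |(((1 - (q:ℂ)/w^2) • (1 : ℂ →L[ℂ] ℂ)).restrictScalars ℝ).det| •
        (P.eval (w + (q:ℂ)/w) * ((starRingEnd ℂ) (w + (q:ℂ)/w))^k) =
      (w ^ (n:ℤ) - (q:ℂ)^(n+1) * w ^ (-(n:ℤ)-2)) *
        (starRingEnd ℂ) ((1 - (q:ℂ)/w^2) * (w + (q:ℂ)/w)^k) := by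
    intro w hw
    rw [cheb_det, _root_.abs_of_nonneg (Complex.normSq_nonneg _)]
    exact cheb_alg q n k P hval (hA0 w hw) (hAq w hw)
  rw [setIntegral_congr_fun hAmeas hpt]
  exact cheb_polar q hq0 n k hkn
end

section
/- Let q ∈ [0,1) and U_n the monic Chebyshev polynomial of the second kind for [-2√q, 2√q]. Then ∫_D U_n(z) conj(z^n) dA(z) = (π/(n+1))(1 - q^{2n+2}), where D is the interior of the ellipse bounded by {e^{iθ} + q e^{-iθ}}. -/
open MeasureTheory Set
open scoped Real

noncomputable def Complex.abs : AbsoluteValue ℂ ℝ :=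
  IsAbsoluteValue.toAbsoluteValue (norm : ℂ → ℝ)

theorem Complex.norm_eq_abs (z : ℂ) : ‖z‖ = Complex.abs z := rfl

theorem Complex.sq_abs (z : ℂ) : Complex.abs z ^ 2 = Complex.normSq z := Complex.sq_norm z

theorem Complex.abs_ofReal (r : ℝ) : Complex.abs (r : ℂ) = |r| := Complex.norm_real r

theorem Complex.continuous_abs : Continuous Complex.abs := continuous_norm

theorem Complex.polarCoord_symm_abs (p : ℝ × ℝ) :
    Complex.abs (Complex.polarCoord.symm p) = |p.1| := Complex.norm_polarCoord_symm p

theorem Complex.abs_exp_ofReal_mul_I (x : ℝ) : Complex.abs (Complex.exp (x * Complex.I)) = 1 :=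
  Complex.norm_exp_ofReal_mul_I x

namespace ChebAux

noncomputable def hfun (q : ℝ) (n : ℕ) (φ : ℂ) : ℂ :=
  ((φ ^ (2 * n + 2) - (q : ℂ) ^ (n + 1)) *
      (starRingEnd ℂ) ((φ ^ 2 + (q : ℂ)) ^ n * (φ ^ 2 - (q : ℂ)))) /
    (φ * (starRingEnd ℂ) φ) ^ (n + 2)


lemma key (q : ℝ) (n : ℕ) (P : Polynomial ℂ)
    (hval : ∀ w : ℂ, w ≠ 0 → w - (q : ℂ) / w ≠ 0 →
      P.eval (w + (q : ℂ) / w) =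
        (w ^ (n + 1) - (q : ℂ) ^ (n + 1) / w ^ (n + 1)) / (w - (q : ℂ) / w)) :
    ∀ w : ℂ, w ≠ 0 →
      P.eval (w + (q : ℂ) / w) * (w ^ 2 - (q : ℂ)) * w ^ n
        = w ^ (2 * n + 2) - (q : ℂ) ^ (n + 1) := by
  intro w hw
  by_cases h : w - (q : ℂ) / w = 0
  · have hq : (q : ℂ) = w ^ 2 := by
      field_simp at h
      linear_combination -h
    rw [hq]
    ring
  · have h2 : w ^ 2 - (q : ℂ) ≠ 0 := by
      intro hc
      apply h
      field_simp
      linear_combination hc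
    rw [hval w hw h]
    have hw1 : w ^ (n + 1) ≠ 0 := pow_ne_zero _ hw
    rw [div_mul_eq_mul_div, div_mul_eq_mul_div, div_eq_iff h]
    field_simp
    ring

lemma det_aux (d : ℂ) :
    (((1 : ℂ →L[ℂ] ℂ).smulRight d).restrictScalars ℝ).det = Complex.normSq d := by
  have h1 : (((1 : ℂ →L[ℂ] ℂ).smulRight d).restrictScalars ℝ : ℂ →ₗ[ℝ] ℂ)
      = Algebra.lmul ℝ ℂ d := by
    apply LinearMap.ext
    intro z
    simp [mul_comm]
  rw [ContinuousLinearMap.det, h1, ← Algebra.norm_apply, Algebra.norm_complex_apply]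

lemma int_exp (k : ℤ) :
    (∫ θ in (-π)..π, Complex.exp (k * θ * Complex.I))
      = if k = 0 then (2 * π : ℂ) else 0 := by
  rcases eq_or_ne k 0 with hk | hk
  · simp [hk, Complex.ofReal_neg, two_mul]
  · rw [if_neg hk]
    have hc : (k : ℂ) * Complex.I ≠ 0 := by
      simp [Complex.I_ne_zero, hk]
    have h0 : ∀ θ : ℝ, (k : ℂ) * θ * Complex.I = ((k : ℂ) * Complex.I) * θ := by
      intro θ; ring
    simp_rw [h0]
    rw [integral_exp_mul_complex hc]
    have h1 : Complex.exp ((k:ℂ) * Complex.I * (π:ℝ)) = (-1 : ℂ) ^ k := by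
      rw [show ((k:ℂ) * Complex.I * (π:ℝ)) = k * ((π:ℝ) * Complex.I) by ring,
        Complex.exp_int_mul, Complex.exp_pi_mul_I]
    have h2 : Complex.exp ((k:ℂ) * Complex.I * ((-π : ℝ) : ℝ)) = (-1 : ℂ) ^ (-k) := by
      rw [show ((k:ℂ) * Complex.I * ((-π:ℝ):ℝ)) = ((-k : ℤ) : ℂ) * ((π:ℝ) * Complex.I) by
          push_cast; ring,
        Complex.exp_int_mul, Complex.exp_pi_mul_I]
    have h3 : (-1 : ℂ) ^ (-k) = (-1 : ℂ) ^ k := by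
      rw [zpow_neg]
      refine inv_eq_of_mul_eq_one_left ?_
      rw [← mul_zpow]
      norm_num
    rw [h1, h2, h3, sub_self, zero_div]

lemma reim (q : ℝ) (φ : ℂ) (hφ : φ ≠ 0) :
    (φ + (q:ℂ)/φ).re = φ.re + q * φ.re / (φ.re^2 + φ.im^2) ∧
    (φ + (q:ℂ)/φ).im = φ.im - q * φ.im / (φ.re^2 + φ.im^2) := by
  constructor
  · simp [Complex.div_re, Complex.normSq_apply]
    ring_nf
  · simp [Complex.div_im, Complex.normSq_apply]
    ring_nf

lemma mem_ell {q : ℝ} (hq0 : 0 ≤ q) (hq1 : q < 1) {φ : ℂ}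
    (h1 : q < φ.re^2 + φ.im^2) (h2 : φ.re^2 + φ.im^2 < 1) :
    ((φ + (q:ℂ)/φ).re / (1 + q)) ^ 2 + ((φ + (q:ℂ)/φ).im / (1 - q)) ^ 2 < 1 := by
  have hs0 : 0 < φ.re^2 + φ.im^2 := lt_of_le_of_lt hq0 h1
  have hφ : φ ≠ 0 := by
    intro h; rw [h] at hs0; simp at hs0
  obtain ⟨hre, him⟩ := reim q φ hφ
  rw [hre, him]
  set x := φ.re
  set y := φ.im
  have h1q : (0:ℝ) < 1 + q := by linarith
  have h1q' : (0:ℝ) < 1 - q := by linarith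
  have hb : 0 < x^2*(1-q)^2 + y^2*(1+q)^2 := by
    nlinarith [sq_nonneg x, sq_nonneg y, sq_nonneg (1-q), sq_nonneg (1+q),
      mul_le_mul_of_nonneg_left (show (1-q)^2 ≤ (1+q)^2 by nlinarith) (sq_nonneg y),
      mul_pos hs0 (pow_pos h1q' 2)]
  have key : x^2*(x^2+y^2+q)^2*(1-q)^2 + y^2*(x^2+y^2-q)^2*(1+q)^2
      < (x^2+y^2)^2*(1+q)^2*(1-q)^2 := by
    nlinarith [mul_pos (mul_pos (show 0 < 1 - (x^2+y^2) by linarith)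
      (show 0 < (x^2+y^2) - q^2 by nlinarith)) hb]
  calc (( x + q*x/(x^2+y^2))/(1+q))^2 + ((y - q*y/(x^2+y^2))/(1-q))^2
      = (x^2*(x^2+y^2+q)^2*(1-q)^2 + y^2*(x^2+y^2-q)^2*(1+q)^2)
        / ((x^2+y^2)^2*(1+q)^2*(1-q)^2) := by
        field_simp
    _ < 1 := by
        rw [div_lt_one (by positivity)]
        exact key

lemma not_mem_ell {q : ℝ} (hq0 : 0 ≤ q) (hq1 : q < 1) {φ : ℂ}
    (h2 : 1 ≤ φ.re^2 + φ.im^2) :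
    1 ≤ ((φ + (q:ℂ)/φ).re / (1 + q)) ^ 2 + ((φ + (q:ℂ)/φ).im / (1 - q)) ^ 2 := by
  have hs0 : 0 < φ.re^2 + φ.im^2 := by linarith
  have hφ : φ ≠ 0 := by
    intro h; rw [h] at hs0; simp at hs0
  obtain ⟨hre, him⟩ := reim q φ hφ
  rw [hre, him]
  set x := φ.re
  set y := φ.im
  have h1q : (0:ℝ) < 1 + q := by linarith
  have h1q' : (0:ℝ) < 1 - q := by linarith
  have key : (x^2+y^2)^2*(1+q)^2*(1-q)^2
      ≤ x^2*(x^2+y^2+q)^2*(1-q)^2 + y^2*(x^2+y^2-q)^2*(1+q)^2 := by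
    nlinarith [mul_nonneg (mul_nonneg (show 0 ≤ (x^2+y^2) - 1 by linarith)
      (show 0 ≤ (x^2+y^2) - q^2 by nlinarith))
      (show 0 ≤ x^2*(1-q)^2 + y^2*(1+q)^2 by positivity)]
  calc (1:ℝ) ≤ (x^2*(x^2+y^2+q)^2*(1-q)^2 + y^2*(x^2+y^2-q)^2*(1+q)^2)
        / ((x^2+y^2)^2*(1+q)^2*(1-q)^2) := by
        rw [le_div_iff₀ (by positivity)]
        linarith [key]
    _ = ((x + q*x/(x^2+y^2))/(1+q))^2 + ((y - q*y/(x^2+y^2))/(1-q))^2 := by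
        field_simp

lemma sq_abs' (φ : ℂ) : φ.re^2 + φ.im^2 = (Complex.abs φ)^2 := by
  rw [Complex.sq_abs, Complex.normSq_apply]; ring

lemma abs_iff {q : ℝ} (hq0 : 0 ≤ q) (φ : ℂ) :
    Real.sqrt q < Complex.abs φ ↔ q < φ.re^2 + φ.im^2 := by
  rw [sq_abs']
  constructor
  · intro h
    have h0 : 0 < Complex.abs φ := lt_of_le_of_lt (Real.sqrt_nonneg q) h
    exact (Real.sqrt_lt' h0).mp h
  · intro h
    have h0 : 0 < Complex.abs φ := by
      by_contra hc
      push_neg at hc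
      have : Complex.abs φ = 0 := le_antisymm hc (Complex.abs.nonneg φ)
      rw [this] at h; nlinarith
    exact (Real.sqrt_lt' h0).mpr h

lemma abs_iff1 (φ : ℂ) : Complex.abs φ < 1 ↔ φ.re^2 + φ.im^2 < 1 := by
  rw [sq_abs']
  constructor
  · intro h; nlinarith [Complex.abs.nonneg φ]
  · intro h; nlinarith [Complex.abs.nonneg φ]

lemma inj_on (q : ℝ) (hq0 : 0 ≤ q) :
    Set.InjOn (fun φ : ℂ => φ + (q:ℂ)/φ)
      {φ : ℂ | Real.sqrt q < Complex.abs φ ∧ Complex.abs φ < 1} := by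
  rintro a ⟨ha1, _⟩ b ⟨hb1, _⟩ hab
  have ha0 : a ≠ 0 := by
    intro h; rw [h] at ha1; simp at ha1; nlinarith [Real.sqrt_nonneg q]
  have hb0 : b ≠ 0 := by
    intro h; rw [h] at hb1; simp at hb1; nlinarith [Real.sqrt_nonneg q]
  simp only at hab
  have hfac : (a - b) * (a*b - q) = 0 := by
    have h' := hab
    field_simp at h'
    linear_combination h'
  rcases mul_eq_zero.mp hfac with h | h
  · exact sub_eq_zero.mp h
  · exfalso
    have : Complex.abs (a*b - q) = 0 := by rw [h]; simp
    have habs : Complex.abs (a*b) = q := by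
      have := sub_eq_zero.mp h
      rw [this]
      simp [Complex.abs_ofReal, abs_of_nonneg hq0]
    rw [map_mul] at habs
    have : q < Complex.abs a * Complex.abs b := by
      calc q = Real.sqrt q * Real.sqrt q := (Real.mul_self_sqrt hq0).symm
      _ < Complex.abs a * Complex.abs b := by
          apply mul_lt_mul'' ha1 hb1 (Real.sqrt_nonneg q) (Real.sqrt_nonneg q)
    linarith

lemma reim2 (q : ℝ) (φ : ℂ) (hφ : φ ≠ 0) :
    (φ + (q:ℂ)/φ).im = φ.im - q * φ.im / (φ.re^2 + φ.im^2) := by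
  simp [Complex.div_im, Complex.normSq_apply]
  ring_nf

lemma exists_preimage {q : ℝ} (hq0 : 0 ≤ q) (hq1 : q < 1) {z : ℂ}
    (hz : (z.re / (1 + q)) ^ 2 + (z.im / (1 - q)) ^ 2 < 1) (him : z.im ≠ 0) :
    ∃ φ : ℂ, (Real.sqrt q < Complex.abs φ ∧ Complex.abs φ < 1) ∧ φ + (q:ℂ)/φ = z := by
  have H : ∃ s : ℂ, s^2 = z^2 - 4*q ∧
      Complex.abs ((z-s)/2) ≤ Complex.abs ((z+s)/2) := by
    obtain ⟨s, hs⟩ := IsAlgClosed.exists_pow_nat_eq (k := ℂ) (z^2 - 4*q) (n := 2) (by norm_num)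
    rcases le_total (Complex.abs ((z-s)/2)) (Complex.abs ((z+s)/2)) with h | h
    · exact ⟨s, hs, h⟩
    · refine ⟨-s, by rw [neg_pow]; simpa using hs, ?_⟩
      have e1 : z - -s = z + s := by ring
      have e2 : z + -s = z - s := by ring
      rw [e1, e2]
      exact h
  obtain ⟨s, hs, hle⟩ := H
  set φ : ℂ := (z+s)/2 with hφdef
  set ψ : ℂ := (z-s)/2 with hψdef
  have hsum : φ + ψ = z := by rw [hφdef, hψdef]; ring
  have hprod : φ * ψ = (q:ℂ) := by
    rw [hφdef, hψdef]
    have : (z+s)/2 * ((z-s)/2) = (z^2 - s^2)/4 := by ring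
    rw [this, hs]
    ring
  have hφ0 : φ ≠ 0 := by
    intro h
    rw [h] at hle
    simp only [map_zero] at hle
    have hψ0 : ψ = 0 := by
      have := Complex.abs.nonneg ψ
      have : Complex.abs ψ = 0 := le_antisymm hle (Complex.abs.nonneg ψ)
      exact Complex.abs.eq_zero.mp this
    rw [h, hψ0] at hsum
    simp at hsum
    rw [← hsum] at him
    simp at him
  have hdiv : (q:ℂ)/φ = ψ := by
    rw [← hprod]
    field_simp
  have hgz : φ + (q:ℂ)/φ = z := by rw [hdiv]; exact hsum
  have habsq : q ≤ (Complex.abs φ)^2 := by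
    have h1 : Complex.abs φ * Complex.abs ψ = q := by
      rw [← map_mul, hprod, Complex.abs_ofReal, abs_of_nonneg hq0]
    nlinarith [Complex.abs.nonneg φ, Complex.abs.nonneg ψ,
      mul_le_mul_of_nonneg_left hle (Complex.abs.nonneg φ)]
  have hstrict : q < φ.re^2 + φ.im^2 := by
    rw [sq_abs']
    rcases lt_or_eq_of_le habsq with h | h
    · exact h
    · exfalso
      have hq' : φ.re^2 + φ.im^2 = q := by rw [sq_abs']; exact h.symm
      have hqpos : 0 < q := by
        rcases lt_or_eq_of_le hq0 with h' | h'
        · exact h'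
        · exfalso
          apply hφ0
          have : φ.re^2 + φ.im^2 = 0 := by rw [hq', ← h']
          have h1 : φ.re = 0 := by nlinarith [sq_nonneg φ.re, sq_nonneg φ.im]
          have h2 : φ.im = 0 := by nlinarith [sq_nonneg φ.re, sq_nonneg φ.im]
          exact Complex.ext h1 h2
      apply him
      rw [← hgz, reim2 q φ hφ0, hq']
      field_simp
      simp
  have habs1 : Complex.abs φ < 1 := by
    rw [abs_iff1]
    by_contra hc
    push_neg at hc
    have := not_mem_ell hq0 hq1 hc
    rw [hgz] at this
    linarith
  exact ⟨φ, ⟨(abs_iff hq0 φ).mpr hstrict, habs1⟩, hgz⟩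

lemma conj_exp (θ : ℝ) :
    (starRingEnd ℂ) (Complex.exp (θ * Complex.I)) = (Complex.exp (θ * Complex.I))⁻¹ := by
  rw [← Complex.exp_conj, ← Complex.exp_neg]
  congr 1
  simp [Complex.conj_I]

lemma exp_zpow (θ : ℝ) (k : ℤ) :
    Complex.exp ((k : ℂ) * θ * Complex.I) = (Complex.exp (θ * Complex.I)) ^ k := by
  rw [show (k:ℂ) * θ * Complex.I = k * (θ * Complex.I) by ring, Complex.exp_int_mul]

lemma hfun_mul (q r : ℝ) (n : ℕ) (hr : r ≠ 0) (θ : ℝ) :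
    hfun q n ((r:ℂ) * Complex.exp (θ * Complex.I)) =
      ((r:ℂ)^(2*n+2) * (Complex.exp (θ * Complex.I))^(2*n+2) - (q:ℂ)^(n+1)) *
        (((r:ℂ)^2 * ((Complex.exp (θ * Complex.I))⁻¹)^2 + (q:ℂ))^n *
          ((r:ℂ)^2 * ((Complex.exp (θ * Complex.I))⁻¹)^2 - (q:ℂ)))
        / (r:ℂ)^(2*n+4) := by
  set u := Complex.exp (θ * Complex.I) with hu_def
  have hu : u ≠ 0 := Complex.exp_ne_zero _
  have hcu : (starRingEnd ℂ) u = u⁻¹ := conj_exp θ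
  have hrc : (r : ℂ) ≠ 0 := Complex.ofReal_ne_zero.mpr hr
  unfold hfun
  simp only [map_mul, map_pow, map_sub, map_add, Complex.conj_ofReal, hcu]
  field_simp
  ring



lemma hpt (q r : ℝ) (n : ℕ) (hr : r ≠ 0) (θ : ℝ) :
    hfun q n ((r:ℂ) * Complex.exp (θ * Complex.I)) =
      (∑ j ∈ Finset.range (n+1), ((n.choose j : ℂ) * (r:ℂ)^(2*j) * (q:ℂ)^(n-j)) *
        ((r:ℂ)^(2*n+4) * Complex.exp (((2*((n:ℤ)-j)) : ℤ) * θ * Complex.I)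
         - (r:ℂ)^(2*n+2) * (q:ℂ) * Complex.exp (((2*((n:ℤ)-j)+2) : ℤ) * θ * Complex.I)
         - (q:ℂ)^(n+1) * (r:ℂ)^2 * Complex.exp (((-2*(j:ℤ)-2) : ℤ) * θ * Complex.I)
         + (q:ℂ)^(n+2) * Complex.exp (((-2*(j:ℤ)) : ℤ) * θ * Complex.I)))
        / (r:ℂ)^(2*n+4) := by
  rw [hfun_mul q r n hr θ]
  have hu : Complex.exp (θ * Complex.I) ≠ 0 := Complex.exp_ne_zero _
  rw [add_pow, Finset.sum_mul, Finset.mul_sum, Finset.sum_div, Finset.sum_div]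
  refine Finset.sum_congr rfl ?_
  intro j hj
  have hjn : j ≤ n := by
    have := Finset.mem_range.mp hj; omega
  obtain ⟨m, hm⟩ : ∃ m, n = j + m := ⟨n - j, by omega⟩
  rw [exp_zpow, exp_zpow, exp_zpow, exp_zpow]
  have e1 : Complex.exp (θ * Complex.I) ^ ((2*((n:ℤ)-j)) : ℤ)
      = Complex.exp (θ * Complex.I) ^ (2*m) := by
    rw [show (2*((n:ℤ)-j)) = ((2*m : ℕ) : ℤ) by push_cast [hm]; ring, zpow_natCast]
  have e2 : Complex.exp (θ * Complex.I) ^ ((2*((n:ℤ)-j)+2) : ℤ)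
      = Complex.exp (θ * Complex.I) ^ (2*m+2) := by
    rw [show (2*((n:ℤ)-j)+2) = ((2*m+2 : ℕ) : ℤ) by push_cast [hm]; ring, zpow_natCast]
  have e3 : Complex.exp (θ * Complex.I) ^ ((-2*(j:ℤ)-2) : ℤ)
      = (Complex.exp (θ * Complex.I) ^ (2*j+2))⁻¹ := by
    rw [show (-2*(j:ℤ)-2) = -((2*j+2 : ℕ) : ℤ) by push_cast; ring, zpow_neg, zpow_natCast]
  have e4 : Complex.exp (θ * Complex.I) ^ ((-2*(j:ℤ)) : ℤ)
      = (Complex.exp (θ * Complex.I) ^ (2*j))⁻¹ := by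
    rw [show (-2*(j:ℤ)) = -((2*j : ℕ) : ℤ) by push_cast; ring, zpow_neg, zpow_natCast]
  rw [e1, e2, e3, e4, hm, Nat.add_sub_cancel_left]
  have hrc : (r : ℂ) ≠ 0 := Complex.ofReal_ne_zero.mpr hr
  simp only [mul_pow, inv_pow, ← pow_mul]
  field_simp
  ring



lemma hint (k : ℤ) :
    IntervalIntegrable (fun θ : ℝ => Complex.exp ((k:ℂ) * θ * Complex.I))
      MeasureTheory.volume (-π) π := by
  apply Continuous.intervalIntegrable
  fun_prop

lemma inner_int (q r : ℝ) (n : ℕ) (hr : 0 < r) :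
    (∫ θ in (-π)..π, hfun q n ((r:ℂ) * Complex.exp (θ * Complex.I)))
      = (2*(π:ℂ)*((r:ℂ)^(4*n+4) + (q:ℂ)^(2*n+2))) / (r:ℂ)^(2*n+4) := by
  have hrne : r ≠ 0 := ne_of_gt hr
  have hpt' : ∀ θ : ℝ, hfun q n ((r:ℂ) * Complex.exp (θ * Complex.I)) =
      (∑ j ∈ Finset.range (n+1), ((n.choose j : ℂ) * (r:ℂ)^(2*j) * (q:ℂ)^(n-j)) *
        ((r:ℂ)^(2*n+4) * Complex.exp (((2*((n:ℤ)-j)) : ℤ) * θ * Complex.I)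
         - (r:ℂ)^(2*n+2) * (q:ℂ) * Complex.exp (((2*((n:ℤ)-j)+2) : ℤ) * θ * Complex.I)
         - (q:ℂ)^(n+1) * (r:ℂ)^2 * Complex.exp (((-2*(j:ℤ)-2) : ℤ) * θ * Complex.I)
         + (q:ℂ)^(n+2) * Complex.exp (((-2*(j:ℤ)) : ℤ) * θ * Complex.I)))
        / (r:ℂ)^(2*n+4) := hpt q r n hrne
  rw [intervalIntegral.integral_congr (g := fun θ =>
      (∑ j ∈ Finset.range (n+1), ((n.choose j : ℂ) * (r:ℂ)^(2*j) * (q:ℂ)^(n-j)) *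
        ((r:ℂ)^(2*n+4) * Complex.exp (((2*((n:ℤ)-j)) : ℤ) * θ * Complex.I)
         - (r:ℂ)^(2*n+2) * (q:ℂ) * Complex.exp (((2*((n:ℤ)-j)+2) : ℤ) * θ * Complex.I)
         - (q:ℂ)^(n+1) * (r:ℂ)^2 * Complex.exp (((-2*(j:ℤ)-2) : ℤ) * θ * Complex.I)
         + (q:ℂ)^(n+2) * Complex.exp (((-2*(j:ℤ)) : ℤ) * θ * Complex.I)))
        / (r:ℂ)^(2*n+4)) (fun θ _ => hpt' θ)]
  rw [intervalIntegral.integral_div]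
  rw [intervalIntegral.integral_finset_sum (fun j hj => by
    apply IntervalIntegrable.const_mul
    exact ((((hint _).const_mul _).sub ((hint _).const_mul _)).sub
      ((hint _).const_mul _)).add ((hint _).const_mul _))]
  have key : ∀ j ∈ Finset.range (n+1),
      (∫ θ in (-π)..π, ((n.choose j : ℂ) * (r:ℂ)^(2*j) * (q:ℂ)^(n-j)) *
        ((r:ℂ)^(2*n+4) * Complex.exp (((2*((n:ℤ)-j)) : ℤ) * θ * Complex.I)
         - (r:ℂ)^(2*n+2) * (q:ℂ) * Complex.exp (((2*((n:ℤ)-j)+2) : ℤ) * θ * Complex.I)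
         - (q:ℂ)^(n+1) * (r:ℂ)^2 * Complex.exp (((-2*(j:ℤ)-2) : ℤ) * θ * Complex.I)
         + (q:ℂ)^(n+2) * Complex.exp (((-2*(j:ℤ)) : ℤ) * θ * Complex.I)))
      = (if j = n then 2*(π:ℂ)*(r:ℂ)^(4*n+4) else 0)
        + (if j = 0 then 2*(π:ℂ)*(q:ℂ)^(2*n+2) else 0) := by
    intro j hj
    have hjn : j ≤ n := by have := Finset.mem_range.mp hj; omega
    rw [intervalIntegral.integral_const_mul,
      intervalIntegral.integral_add
        ((((hint _).const_mul _).sub ((hint _).const_mul _)).sub ((hint _).const_mul _))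
        ((hint _).const_mul _),
      intervalIntegral.integral_sub
        (((hint _).const_mul _).sub ((hint _).const_mul _)) ((hint _).const_mul _),
      intervalIntegral.integral_sub ((hint _).const_mul _) ((hint _).const_mul _),
      intervalIntegral.integral_const_mul, intervalIntegral.integral_const_mul,
      intervalIntegral.integral_const_mul, intervalIntegral.integral_const_mul,
      int_exp, int_exp, int_exp, int_exp]
    have i2 : ¬ ((2*((n:ℤ)-j)+2) = 0) := by omega
    have i3 : ¬ ((-2*(j:ℤ)-2) = 0) := by omega
    rw [if_neg i2, if_neg i3]
    have i1 : (if (2*((n:ℤ)-j)) = 0 then (2*(π:ℂ)) else 0)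
        = (if j = n then (2*(π:ℂ)) else 0) := by
      by_cases h : j = n
      · subst h; simp
      · rw [if_neg h, if_neg (by omega)]
    have i4 : (if (-2*(j:ℤ)) = 0 then (2*(π:ℂ)) else 0)
        = (if j = 0 then (2*(π:ℂ)) else 0) := by
      by_cases h : j = 0
      · subst h; simp
      · rw [if_neg h, if_neg (by omega)]
    rw [i1, i4]
    by_cases h1 : j = n
    · by_cases h2 : j = 0
      · subst h2; subst h1
        simp
        ring
      · subst h1
        rw [if_pos rfl, if_neg h2, if_pos rfl, if_neg h2]
        simp [Nat.choose_self, Nat.sub_self]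
        ring
    · by_cases h2 : j = 0
      · subst h2
        rw [if_neg h1, if_pos rfl, if_neg h1, if_pos rfl]
        simp [Nat.choose_zero_right]
        rw [show (2*n+2) = n + (n+2) by ring, pow_add]
        ring
      · rw [if_neg h1, if_neg h2, if_neg h1, if_neg h2]
        ring
  rw [Finset.sum_congr rfl key, Finset.sum_add_distrib,
    Finset.sum_ite_eq' (Finset.range (n+1)) n, Finset.sum_ite_eq' (Finset.range (n+1)) 0,
    if_pos (Finset.self_mem_range_succ n), if_pos (Finset.mem_range.mpr (by omega))]
  ring

lemma line_null : MeasureTheory.volume {z : ℂ | z.im = 0} = 0 := by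
  have h : {z : ℂ | z.im = 0} = (LinearMap.ker Complex.imLm : Set ℂ) := by
    ext z
    simp [LinearMap.mem_ker, Complex.imLm]
  rw [h]
  apply MeasureTheory.Measure.addHaar_submodule
  intro hT
  have hI : Complex.I ∈ LinearMap.ker Complex.imLm := by rw [hT]; trivial
  simp [LinearMap.mem_ker, Complex.imLm] at hI

lemma outer (q : ℝ) (hq0 : 0 ≤ q) (hq1 : q < 1) (n : ℕ) :
    (∫ r in Set.Ioo (Real.sqrt q) 1, 2*π*r*(r^(4*n+4)+q^(2*n+2))/r^(2*n+4))
      = π/(n+1) * (1 - q^(2*n+2)) := by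
  have hs1 : Real.sqrt q ≤ 1 := by
    rw [show (1:ℝ) = Real.sqrt 1 by simp]
    exact Real.sqrt_le_sqrt (le_of_lt hq1)
  have hcong : ∀ r ∈ Set.Ioo (Real.sqrt q) 1,
      2*π*r*(r^(4*n+4)+q^(2*n+2))/r^(2*n+4)
        = 2*π*r^(2*n+1) + (2*π*q^(2*n+2)) * r^(-(2*(n:ℤ))-3) := by
    intro r hr
    have hr0 : 0 < r := lt_of_le_of_lt (Real.sqrt_nonneg q) hr.1
    have hrne : r ≠ 0 := ne_of_gt hr0
    rw [show (-(2*(n:ℤ))-3) = -((2*n+3 : ℕ) : ℤ) by push_cast; ring, zpow_neg, zpow_natCast]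
    field_simp
    ring
  rw [MeasureTheory.setIntegral_congr_fun measurableSet_Ioo hcong,
    ← MeasureTheory.integral_Ioc_eq_integral_Ioo, ← intervalIntegral.integral_of_le hs1]
  have hI1 : IntervalIntegrable (fun r : ℝ => 2*π*r^(2*n+1))
      MeasureTheory.volume (Real.sqrt q) 1 := by
    apply Continuous.intervalIntegrable; fun_prop
  have hI2 : IntervalIntegrable (fun r : ℝ => (2*π*q^(2*n+2)) * r^(-(2*(n:ℤ))-3))
      MeasureTheory.volume (Real.sqrt q) 1 := by
    by_cases hq : q = 0
    · have : (fun r : ℝ => (2*π*q^(2*n+2)) * r^(-(2*(n:ℤ))-3)) = fun _ => (0:ℝ) := by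
        funext r
        rw [hq]
        rw [zero_pow (by omega)]
        ring
      rw [this]
      exact intervalIntegrable_const
    · have hqpos : 0 < q := lt_of_le_of_ne hq0 (Ne.symm hq)
      apply IntervalIntegrable.const_mul
      apply intervalIntegral.intervalIntegrable_zpow
      right
      rw [Set.uIcc_of_le hs1]
      intro hc
      have := (Set.mem_Icc.mp hc).1
      nlinarith [Real.sqrt_pos.mpr hqpos]
  rw [intervalIntegral.integral_add hI1 hI2]
  have hsq : Real.sqrt q ^ (2*n+2) = q^(n+1) := by
    rw [show 2*n+2 = 2*(n+1) by ring, pow_mul, Real.sq_sqrt hq0]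
  have e1 : (∫ r in (Real.sqrt q)..1, 2*π*r^(2*n+1)) = π/(n+1) * (1 - q^(n+1)) := by
    rw [intervalIntegral.integral_const_mul, integral_pow]
    rw [show 2*n+1+1 = 2*n+2 by ring, hsq, one_pow]
    have : ((2*n+1 : ℕ) : ℝ) + 1 = 2*((n:ℝ)+1) := by push_cast; ring
    rw [this]
    have hn1 : ((n:ℝ)+1) ≠ 0 := by positivity
    field_simp
  have e2 : (∫ r in (Real.sqrt q)..1, (2*π*q^(2*n+2)) * r^(-(2*(n:ℤ))-3))
      = π/(n+1) * (q^(n+1) - q^(2*n+2)) := by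
    by_cases hq : q = 0
    · subst hq
      simp [zero_pow (show 2*n+2 ≠ 0 by omega), zero_pow (show n+1 ≠ 0 by omega)]
    · have hqpos : 0 < q := lt_of_le_of_ne hq0 (Ne.symm hq)
      have hsqpos : 0 < Real.sqrt q := Real.sqrt_pos.mpr hqpos
      rw [intervalIntegral.integral_const_mul, integral_zpow (Or.inr ⟨by omega, by
        rw [Set.uIcc_of_le hs1]
        intro hc
        have := (Set.mem_Icc.mp hc).1
        nlinarith⟩)]
    
      rw [show (-(2*(n:ℤ))-3+1) = -((2*n+2 : ℕ) : ℤ) by push_cast; ring]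
      rw [one_zpow, zpow_neg, zpow_natCast, hsq]
      have hn1 : ((n:ℝ)+1) ≠ 0 := by positivity
      have hq1ne : q^(n+1) ≠ 0 := pow_ne_zero _ (ne_of_gt hqpos)
      have : ((-(2*(n:ℤ))-3 : ℤ) : ℝ) + 1 = -(2*((n:ℝ)+1)) := by push_cast; ring
      rw [this]
      field_simp
      ring
  rw [e1, e2]
  ring

lemma integrand_eq (q : ℝ) (n : ℕ) (P : Polynomial ℂ)
    (hkey : ∀ w : ℂ, w ≠ 0 →
      P.eval (w + (q : ℂ) / w) * (w ^ 2 - (q : ℂ)) * w ^ n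
        = w ^ (2 * n + 2) - (q : ℂ) ^ (n + 1))
    (φ : ℂ) (hφ : φ ≠ 0) (hφ2 : φ^2 ≠ (q:ℂ)) :
    Complex.normSq (1 - (q:ℂ)/φ^2) •
        (P.eval (φ + (q:ℂ)/φ) * ((starRingEnd ℂ) (φ + (q:ℂ)/φ))^n) = hfun q n φ := by
  have hP : P.eval (φ + (q:ℂ)/φ) = (φ^(2*n+2) - (q:ℂ)^(n+1)) / ((φ^2 - q) * φ^n) := by
    rw [eq_div_iff (mul_ne_zero (sub_ne_zero.mpr hφ2) (pow_ne_zero _ hφ))]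
    rw [← mul_assoc]
    exact hkey φ hφ
  have hcφ : (starRingEnd ℂ) φ ≠ 0 := by simpa using hφ
  have h2 : φ^2 - (q:ℂ) ≠ 0 := sub_ne_zero.mpr hφ2
  have hd : (1 : ℂ) - (q:ℂ)/φ^2 = (φ^2 - q)/φ^2 := by
    field_simp
  have hconj : (starRingEnd ℂ) (φ + (q:ℂ)/φ)
      = ((starRingEnd ℂ) φ^2 + q)/((starRingEnd ℂ) φ) := by
    rw [map_add, map_div₀, Complex.conj_ofReal]
    field_simp
  rw [Complex.real_smul, Complex.normSq_eq_conj_mul_self, hP, hd, hconj]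
  rw [map_div₀, map_sub, map_pow, Complex.conj_ofReal]
  unfold hfun
  rw [map_mul, map_pow, map_add, map_sub, map_pow, Complex.conj_ofReal]
  rw [div_pow, div_mul_div_comm, div_mul_div_comm, div_mul_div_comm,
    div_eq_div_iff
      (mul_ne_zero (mul_ne_zero (pow_ne_zero _ hcφ) (pow_ne_zero _ hφ))
        (mul_ne_zero (mul_ne_zero h2 (pow_ne_zero _ hφ)) (pow_ne_zero _ hcφ)))
      (pow_ne_zero _ (mul_ne_zero hφ hcφ))]
  ring

lemma hasDeriv (q : ℝ) (φ : ℂ) (hφ : φ ≠ 0) :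
    HasDerivAt (fun w : ℂ => w + (q:ℂ)/w) (1 - (q:ℂ)/φ^2) φ := by
  have h2 := (hasDerivAt_inv hφ).const_mul (q:ℂ)
  have h3 := (hasDerivAt_id φ).add h2
  have h4 : (1 : ℂ) + (q:ℂ) * -(φ^2)⁻¹ = 1 - (q:ℂ)/φ^2 := by
    rw [div_eq_mul_inv]; ring
  rw [h4] at h3
  refine h3.congr_of_eventuallyEq (Filter.Eventually.of_forall fun w => ?_)
  simp [div_eq_mul_inv]


lemma hfun_contOn (q : ℝ) (n : ℕ) :
    ContinuousOn (hfun q n) {φ : ℂ | φ ≠ 0} := by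
  unfold hfun
  apply ContinuousOn.div
  · apply Continuous.continuousOn
    exact (((continuous_pow _).sub continuous_const).mul
      (Complex.continuous_conj.comp
        ((((continuous_pow 2).add continuous_const).pow n).mul
          ((continuous_pow 2).sub continuous_const))))
  · apply Continuous.continuousOn
    exact (continuous_id.mul Complex.continuous_conj).pow _
  · intro φ hφ
    simp only [Set.mem_setOf_eq] at hφ
    apply pow_ne_zero
    exact mul_ne_zero hφ (by simpa using hφ)

lemma hfun_bound (q : ℝ) (hq0 : 0 ≤ q) (n : ℕ) (φ : ℂ)
    (h1 : Real.sqrt q < Complex.abs φ) (h2 : Complex.abs φ < 1) :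
    ‖hfun q n φ‖ ≤ 2^(n+2) := by
  set r := Complex.abs φ with hr
  have hr0 : 0 < r := lt_of_le_of_lt (Real.sqrt_nonneg q) h1
  have hqr : q ≤ r*r := by
    nlinarith [Real.sq_sqrt hq0, Real.sqrt_nonneg q]
  have hnφ : ‖φ‖ = r := rfl
  unfold hfun
  rw [norm_div, norm_mul, RCLike.norm_conj, norm_pow,
    show ‖φ * (starRingEnd ℂ) φ‖ = r*r from by rw [norm_mul, RCLike.norm_conj, hnφ]]
  rw [div_le_iff₀ (by positivity)]
  have b1 : ‖φ ^ (2*n+2) - (q : ℂ)^(n+1)‖ ≤ 2 * (r*r)^(n+1) := by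
    calc ‖φ ^ (2*n+2) - (q : ℂ)^(n+1)‖ ≤ ‖φ ^ (2*n+2)‖ + ‖(q : ℂ)^(n+1)‖ := norm_sub_le _ _
      _ = r^(2*n+2) + q^(n+1) := by
          rw [norm_pow, norm_pow, hnφ, Complex.norm_eq_abs, Complex.abs_ofReal,
            abs_of_nonneg hq0]
      _ ≤ (r*r)^(n+1) + (r*r)^(n+1) := by
          have e : r^(2*n+2) = (r*r)^(n+1) := by
            rw [show r*r = r^2 by ring, ← pow_mul]; ring_nf
          rw [e]
          have : q^(n+1) ≤ (r*r)^(n+1) := pow_le_pow_left₀ hq0 hqr (n+1)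
          linarith
      _ = 2 * (r*r)^(n+1) := by ring
  have b2 : ‖((φ^2 + (q:ℂ))^n * (φ^2 - (q:ℂ)))‖ ≤ (2*(r*r))^(n+1) := by
    have habs2 : ‖φ^2‖ = r*r := by rw [norm_pow, hnφ]; ring
    have c1 : ‖φ^2 + (q:ℂ)‖ ≤ 2*(r*r) := by
      calc ‖φ^2 + (q:ℂ)‖ ≤ ‖φ^2‖ + ‖(q:ℂ)‖ := norm_add_le _ _
        _ ≤ 2*(r*r) := by
            rw [habs2, Complex.norm_eq_abs, Complex.abs_ofReal, abs_of_nonneg hq0]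
            linarith
    have c2 : ‖φ^2 - (q:ℂ)‖ ≤ 2*(r*r) := by
      calc ‖φ^2 - (q:ℂ)‖ ≤ ‖φ^2‖ + ‖(q:ℂ)‖ := norm_sub_le _ _
        _ ≤ 2*(r*r) := by
            rw [habs2, Complex.norm_eq_abs, Complex.abs_ofReal, abs_of_nonneg hq0]
            linarith
    calc ‖((φ^2 + (q:ℂ))^n * (φ^2 - (q:ℂ)))‖ = ‖φ^2 + (q:ℂ)‖^n * ‖φ^2 - (q:ℂ)‖ := by
          rw [norm_mul, norm_pow]
      _ ≤ (2*(r*r))^n * (2*(r*r)) := by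
          apply mul_le_mul (pow_le_pow_left₀ (norm_nonneg _) c1 n) c2 (norm_nonneg _)
            (by positivity)
      _ = (2*(r*r))^(n+1) := by rw [pow_succ]
  calc ‖φ ^ (2*n+2) - (q : ℂ)^(n+1)‖ * ‖((φ^2 + (q:ℂ))^n * (φ^2 - (q:ℂ)))‖
      ≤ (2 * (r*r)^(n+1)) * ((2*(r*r))^(n+1)) := by
        apply mul_le_mul b1 b2 (norm_nonneg _) (by positivity)
    _ = 2^(n+2) * (r*r)^(2*n+2) := by rw [mul_pow]; ring
    _ ≤ 2^(n+2) * (r*r)^(n+2) := by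
        apply mul_le_mul_of_nonneg_left _ (by positivity)
        apply pow_le_pow_of_le_one (by positivity) (by nlinarith) (by omega)

lemma polar_step (q : ℝ) (hq0 : 0 ≤ q) (hq1 : q < 1) (n : ℕ) :
    (∫ φ in {φ : ℂ | Real.sqrt q < Complex.abs φ ∧ Complex.abs φ < 1}, hfun q n φ)
      = ((Real.pi / (n + 1) * (1 - q ^ (2 * n + 2)) : ℝ) : ℂ) := by
  have hπ : (0:ℝ) < π := Real.pi_pos
  set A : Set ℂ := {φ : ℂ | Real.sqrt q < Complex.abs φ ∧ Complex.abs φ < 1} with hA_def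
  have hAopen : IsOpen A := by
    rw [hA_def]
    exact (isOpen_lt continuous_const Complex.continuous_abs).inter
      (isOpen_lt Complex.continuous_abs continuous_const)
  have hAmeas : MeasurableSet A := hAopen.measurableSet
  set S : Set (ℝ×ℝ) := Set.Ioo (Real.sqrt q) 1 ×ˢ Set.Ioo (-π) π with hS_def
  have hSmeas : MeasurableSet S := measurableSet_Ioo.prod measurableSet_Ioo
  set G : ℝ×ℝ → ℂ :=
    fun p => p.1 • hfun q n ((p.1 : ℂ) * Complex.exp ((p.2:ℂ) * Complex.I)) with hG_def
  have hsymm : ∀ p : ℝ × ℝ, (Complex.polarCoord.symm p)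
      = (p.1:ℂ) * Complex.exp ((p.2 : ℂ) * Complex.I) := by
    intro p
    rw [Complex.polarCoord_symm_apply, Complex.exp_mul_I, ← Complex.ofReal_cos,
      ← Complex.ofReal_sin]
  have htmeas : MeasurableSet polarCoord.target := polarCoord.open_target.measurableSet
  have h1 : (∫ φ in A, hfun q n φ)
      = ∫ p in polarCoord.target,
          p.1 • (A.indicator (hfun q n)) (Complex.polarCoord.symm p) := by
    rw [← MeasureTheory.integral_indicator hAmeas, ← Complex.integral_comp_polarCoord_symm]
  have h2 : ∀ p ∈ polarCoord.target,
      p.1 • (A.indicator (hfun q n)) (Complex.polarCoord.symm p)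
      = ((Set.Ioo (Real.sqrt q) 1 ×ˢ (Set.univ : Set ℝ)).indicator G) p := by
    intro p hp
    rw [polarCoord_target] at hp
    have hp1 : 0 < p.1 := hp.1
    have habs : Complex.abs (Complex.polarCoord.symm p) = p.1 := by
      rw [Complex.polarCoord_symm_abs, abs_of_pos hp1]
    by_cases hmem : p.1 ∈ Set.Ioo (Real.sqrt q) 1
    · have hA' : Complex.polarCoord.symm p ∈ A := by
        rw [hA_def, Set.mem_setOf_eq, habs]
        exact ⟨hmem.1, hmem.2⟩
      have hT : p ∈ Set.Ioo (Real.sqrt q) 1 ×ˢ (Set.univ : Set ℝ) :=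
        ⟨hmem, Set.mem_univ _⟩
      rw [Set.indicator_of_mem hA', Set.indicator_of_mem hT, hG_def]
      simp only
      rw [hsymm p]
    · have hA' : Complex.polarCoord.symm p ∉ A := by
        rw [hA_def, Set.mem_setOf_eq, habs]
        intro hc
        exact hmem ⟨hc.1, hc.2⟩
      have hT : p ∉ Set.Ioo (Real.sqrt q) 1 ×ˢ (Set.univ : Set ℝ) := by
        intro hc
        exact hmem hc.1
      rw [Set.indicator_of_notMem hA', Set.indicator_of_notMem hT, smul_zero]
  have h4 : polarCoord.target ∩ (Set.Ioo (Real.sqrt q) 1 ×ˢ (Set.univ : Set ℝ)) = S := by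
    rw [polarCoord_target, hS_def, Set.prod_inter_prod, Set.inter_univ]
    congr 1
    rw [Set.inter_eq_right]
    intro x hx
    exact lt_of_le_of_lt (Real.sqrt_nonneg q) hx.1
  -- integrability of G on S
  have hmapsTo : ∀ p ∈ S, ((p.1:ℂ) * Complex.exp ((p.2:ℂ) * Complex.I)) ≠ 0 := by
    intro p hp
    rw [hS_def] at hp
    have hp1 : 0 < p.1 := lt_of_le_of_lt (Real.sqrt_nonneg q) hp.1.1
    exact mul_ne_zero (Complex.ofReal_ne_zero.mpr (ne_of_gt hp1)) (Complex.exp_ne_zero _)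
  have habsS : ∀ p : ℝ × ℝ, p ∈ S →
      Complex.abs ((p.1:ℂ) * Complex.exp ((p.2:ℂ) * Complex.I)) = p.1 := by
    intro p hp
    rw [hS_def] at hp
    have hp1 : 0 < p.1 := lt_of_le_of_lt (Real.sqrt_nonneg q) hp.1.1
    rw [map_mul, Complex.abs_ofReal, Complex.abs_exp_ofReal_mul_I, mul_one, abs_of_pos hp1]
  have hGcont : ContinuousOn G S := by
    apply ContinuousOn.smul (continuous_fst.continuousOn)
    apply (hfun_contOn q n).comp
    · apply Continuous.continuousOn
      fun_prop
    · intro p hp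
      exact hmapsTo p hp
  have hInt : MeasureTheory.IntegrableOn G S
      (MeasureTheory.volume.prod MeasureTheory.volume) := by
    have hvol : (MeasureTheory.volume.prod MeasureTheory.volume) S ≠ ⊤ := by
      rw [hS_def, MeasureTheory.Measure.prod_prod, Real.volume_Ioo, Real.volume_Ioo]
      exact ENNReal.mul_ne_top ENNReal.ofReal_ne_top ENNReal.ofReal_ne_top
    constructor
    · rw [← MeasureTheory.Measure.volume_eq_prod]
      exact hGcont.aestronglyMeasurable hSmeas
    · apply MeasureTheory.HasFiniteIntegral.restrict_of_bounded (C := 2^(n+2))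
        (lt_top_iff_ne_top.mpr hvol)
      rw [← MeasureTheory.Measure.volume_eq_prod, MeasureTheory.ae_restrict_iff' hSmeas]
      apply MeasureTheory.ae_of_all
      intro p hp
      have hp' := hp
      rw [hS_def] at hp'
      have hb := hfun_bound q hq0 n ((p.1:ℂ) * Complex.exp ((p.2:ℂ) * Complex.I))
        (by rw [habsS p hp]; exact hp'.1.1) (by rw [habsS p hp]; exact hp'.1.2)
      have hp1 : 0 < p.1 := lt_of_le_of_lt (Real.sqrt_nonneg q) hp'.1.1
      rw [hG_def]
      simp only
      rw [norm_smul]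
      calc ‖p.1‖ * ‖hfun q n ((p.1:ℂ) * Complex.exp ((p.2:ℂ) * Complex.I))‖
          ≤ 1 * 2^(n+2) := by
            apply mul_le_mul _ hb (norm_nonneg _) (by norm_num)
            rw [Real.norm_eq_abs, abs_of_pos hp1]
            exact le_of_lt hp'.1.2
        _ = 2^(n+2) := one_mul _
  have h6 : ∀ r ∈ Set.Ioo (Real.sqrt q) 1, (∫ θ in Set.Ioo (-π) π, G (r, θ))
      = ((2*π*r*(r^(4*n+4)+q^(2*n+2))/r^(2*n+4) : ℝ) : ℂ) := by
    intro r hr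
    have hr0 : 0 < r := lt_of_le_of_lt (Real.sqrt_nonneg q) hr.1
    have e : (∫ θ in Set.Ioo (-π) π, G (r,θ))
        = r • ∫ θ in Set.Ioo (-π) π, hfun q n ((r:ℂ) * Complex.exp ((θ:ℂ) * Complex.I)) := by
      rw [hG_def]
      simp only
      rw [MeasureTheory.integral_smul]
    rw [e, ← MeasureTheory.integral_Ioc_eq_integral_Ioo,
      ← intervalIntegral.integral_of_le (by linarith), inner_int q r n hr0,
      Complex.real_smul]
    have hrne : (r:ℂ) ≠ 0 := Complex.ofReal_ne_zero.mpr (ne_of_gt hr0)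
    push_cast
    ring
  calc (∫ φ in A, hfun q n φ)
      = ∫ p in polarCoord.target,
          p.1 • (A.indicator (hfun q n)) (Complex.polarCoord.symm p) := h1
    _ = ∫ p in polarCoord.target,
          ((Set.Ioo (Real.sqrt q) 1 ×ˢ (Set.univ : Set ℝ)).indicator G) p :=
        MeasureTheory.setIntegral_congr_fun htmeas h2
    _ = ∫ p in polarCoord.target ∩ (Set.Ioo (Real.sqrt q) 1 ×ˢ (Set.univ : Set ℝ)), G p :=
        MeasureTheory.setIntegral_indicator (measurableSet_Ioo.prod MeasurableSet.univ)
    _ = ∫ p in S, G p := by rw [h4]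
    _ = ∫ r in Set.Ioo (Real.sqrt q) 1, (∫ θ in Set.Ioo (-π) π, G (r, θ)) := by
        rw [hS_def, MeasureTheory.Measure.volume_eq_prod]
        exact MeasureTheory.setIntegral_prod G hInt
    _ = ∫ r in Set.Ioo (Real.sqrt q) 1,
          ((2*π*r*(r^(4*n+4)+q^(2*n+2))/r^(2*n+4) : ℝ) : ℂ) :=
        MeasureTheory.setIntegral_congr_fun measurableSet_Ioo h6
    _ = ((∫ r in Set.Ioo (Real.sqrt q) 1,
          2*π*r*(r^(4*n+4)+q^(2*n+2))/r^(2*n+4) : ℝ) : ℂ) := integral_ofReal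
    _ = ((Real.pi / (n + 1) * (1 - q ^ (2 * n + 2)) : ℝ) : ℂ) := by
        rw [outer q hq0 hq1 n]

end ChebAux

/-- For the monic Chebyshev polynomial of the second kind `U_n` for `[-2√q, 2√q]`,
`∫_D U_n(z) conj(z)^n dA(z) = (π/(n+1))(1 - q^{2n+2})`, where `D` is the interior
of the ellipse bounded by `{e^{iθ} + q e^{-iθ}}`. -/
theorem chebyshev_area_norm_ellipse (q : ℝ) (hq0 : 0 ≤ q) (hq1 : q < 1)
    (n : ℕ) (P : Polynomial ℂ) (hmonic : P.Monic) (hdeg : P.natDegree = n)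
    (hval : ∀ w : ℂ, w ≠ 0 → w - (q : ℂ) / w ≠ 0 →
      P.eval (w + (q : ℂ) / w) =
        (w ^ (n + 1) - (q : ℂ) ^ (n + 1) / w ^ (n + 1)) / (w - (q : ℂ) / w)) :
    (∫ z in {z : ℂ | (z.re / (1 + q)) ^ 2 + (z.im / (1 - q)) ^ 2 < 1},
        P.eval z * ((starRingEnd ℂ) z) ^ n) =
      ((Real.pi / (n + 1) * (1 - q ^ (2 * n + 2)) : ℝ) : ℂ) := by
  have hkey := ChebAux.key q n P hval
  set E : Set ℂ := {z : ℂ | (z.re / (1 + q)) ^ 2 + (z.im / (1 - q)) ^ 2 < 1} with hE_def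
  set A : Set ℂ := {φ : ℂ | Real.sqrt q < Complex.abs φ ∧ Complex.abs φ < 1} with hA_def
  set g : ℂ → ℂ := fun φ => φ + (q:ℂ)/φ with hg_def
  set f : ℂ → ℂ := fun z => P.eval z * ((starRingEnd ℂ) z) ^ n with hf_def
  have hAopen : IsOpen A := by
    rw [hA_def]
    have : {φ : ℂ | Real.sqrt q < Complex.abs φ ∧ Complex.abs φ < 1}
        = {φ : ℂ | Real.sqrt q < Complex.abs φ} ∩ {φ : ℂ | Complex.abs φ < 1} := rfl
    rw [this]
    exact (isOpen_lt continuous_const Complex.continuous_abs).inter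
      (isOpen_lt Complex.continuous_abs continuous_const)
  have hAmeas : MeasurableSet A := hAopen.measurableSet
  have hφ0 : ∀ φ ∈ A, φ ≠ 0 := by
    intro φ hφ h0
    rw [hA_def] at hφ
    obtain ⟨h1, _⟩ := hφ
    rw [h0] at h1
    simp at h1
    nlinarith [Real.sqrt_nonneg q]
  -- Step 1 : E agrees a.e. with g '' A
  have hsub1 : g '' A ⊆ E := by
    rintro _ ⟨φ, hφA, rfl⟩
    rw [hA_def, Set.mem_setOf_eq] at hφA
    exact ChebAux.mem_ell hq0 hq1 ((ChebAux.abs_iff hq0 φ).mp hφA.1)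
      ((ChebAux.abs_iff1 φ).mp hφA.2)
  have hsub2 : E \ (g '' A) ⊆ {z : ℂ | z.im = 0} := by
    intro z hz
    by_contra him
    simp only [Set.mem_setOf_eq] at him
    obtain ⟨φ, hφA, hgφ⟩ := ChebAux.exists_preimage hq0 hq1 hz.1 him
    exact hz.2 ⟨φ, hφA, hgφ⟩
  have hEA : E =ᵐ[MeasureTheory.volume] (g '' A) := by
    rw [MeasureTheory.ae_eq_set]
    constructor
    · exact MeasureTheory.measure_mono_null hsub2 ChebAux.line_null
    · rw [Set.diff_eq_empty.mpr hsub1]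
      simp
  have step1 : (∫ z in E, f z) = ∫ z in g '' A, f z :=
    MeasureTheory.setIntegral_congr_set hEA
  -- Step 2 : change of variables
  set g' : ℂ → (ℂ →L[ℝ] ℂ) := fun φ =>
    ((1 : ℂ →L[ℂ] ℂ).smulRight (1 - (q:ℂ)/φ^2)).restrictScalars ℝ with hg'_def
  have hder : ∀ φ ∈ A, HasFDerivWithinAt g (g' φ) A φ := by
    intro φ hφ
    have h1 := (ChebAux.hasDeriv q φ (hφ0 φ hφ))
    rw [hasDerivAt_iff_hasFDerivAt] at h1
    exact (h1.restrictScalars ℝ).hasFDerivWithinAt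
  have step2 : (∫ z in g '' A, f z)
      = ∫ φ in A, |(g' φ).det| • f (g φ) :=
    MeasureTheory.integral_image_eq_integral_abs_det_fderiv_smul
      MeasureTheory.volume hAmeas hder (ChebAux.inj_on q hq0) f
  -- Step 3 : pointwise identification with hfun
  have step3 : (∫ φ in A, |(g' φ).det| • f (g φ)) = ∫ φ in A, ChebAux.hfun q n φ := by
    apply MeasureTheory.setIntegral_congr_fun hAmeas
    intro φ hφ
    have hφne := hφ0 φ hφ
    have hφ2 : φ^2 ≠ (q:ℂ) := by
      intro hc
      rw [hA_def, Set.mem_setOf_eq] at hφ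
      have h1 := (ChebAux.abs_iff hq0 φ).mp hφ.1
      have h2 : Complex.abs φ ^ 2 = q := by
        rw [← map_pow, hc, Complex.abs_ofReal, abs_of_nonneg hq0]
      rw [ChebAux.sq_abs'] at h1
      nlinarith [h1, h2]
    have hdet : (g' φ).det = Complex.normSq (1 - (q:ℂ)/φ^2) := ChebAux.det_aux _
    show |(g' φ).det| • f (g φ) = ChebAux.hfun q n φ
    rw [hdet, abs_of_nonneg (Complex.normSq_nonneg _)]
    exact ChebAux.integrand_eq q n P hkey φ hφne hφ2
  -- Step 4 : polar coordinates
  have step4 : (∫ φ in A, ChebAux.hfun q n φ)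
      = ((Real.pi / (n + 1) * (1 - q ^ (2 * n + 2)) : ℝ) : ℂ) :=
    ChebAux.polar_step q hq0 hq1 n
  rw [step1, step2, step3, step4]
end
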